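/- arXiv:1708.03335 — 8 statements merged into one kernel-verified Lean document; each statement's English description precedes it below -/
import Mathlib

section
/- Let A be a commutative ring, and let B and C be commutative A-algebras. Assume B is a Noetherian unique factorization domain, C is flat and finitely generated as an A-algebra, and for every field K that is an A-algebra, the tensor product K ⊗_A C is a unique factorization domain whose units are exactly the images of the nonzero elements of K. Then B ⊗_A C is a unique factorization domain. -/
/-!
By flatness of `C`, `B ⊗[A] C` embeds into `K ⊗[A] C` for `K = Frac B`, so it is a domain; it is
Noetherian by the Hilbert basis theorem, and `K ⊗[A] C` is its localization at the nonzero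
elements of `B`, a UFD by hypothesis. A prime `p` of `B` stays prime in `B ⊗[A] C`, because
`(B ⊗[A] C) ⧸ (p) ≅ (B ⧸ p) ⊗[A] C` embeds, again by flatness, into the domain
`Frac (B ⧸ p) ⊗[A] C`. So `B ⊗[A] C` is a UFD by Nagata's criterion: a domain with ACC on principal
ideals is a UFD as soon as some localization of it at a submonoid generated by primes is one.

Nagata's criterion is derived from Kaplansky's: a nonzero prime ideal `P` either meets the
submonoid, and then contains one of its prime factors, or it extends to a nonzero prime ideal of
the localization, which contains a prime `π`; a divisibility-minimal `x` with `x ~ π` in the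
localization is then prime in the ring, and lies in `P`.
-/

open TensorProduct

universe u

section Nagata

variable {R : Type*} [CommRing R] [IsDomain R]

theorem dvd_of_dvd_mul_prime {x a p : R} (hp : Prime p) (hpx : ¬ p ∣ x) (h : x ∣ a * p) :
    x ∣ a := by
  obtain ⟨c, hc⟩ := h
  obtain ⟨d, rfl⟩ := (hp.dvd_or_dvd (hc ▸ dvd_mul_left p a)).resolve_left hpx
  exact ⟨d, mul_right_cancel₀ hp.ne_zero (by rw [hc]; ring)⟩

theorem dvd_of_dvd_mul_multiset_prod {x a : R} {m : Multiset R}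
    (hm : ∀ p ∈ m, Prime p ∧ ¬ p ∣ x) (h : x ∣ a * m.prod) : x ∣ a := by
  induction m using Multiset.induction_on generalizing a with
  | empty => simpa using h
  | cons p m ih =>
    have hp := hm p (Multiset.mem_cons_self p m)
    refine dvd_of_dvd_mul_prime hp.1 hp.2 (ih (fun q hq => hm q (Multiset.mem_cons_of_mem hq)) ?_)
    rwa [Multiset.prod_cons, ← mul_assoc] at h

variable {S : Submonoid R} {T : Type*} [CommRing T] [Algebra R T] [IsLocalization S T]

theorem le_nonZeroDivisors_of_exists_prime_factors
    (hS : ∀ s ∈ S, ∃ m : Multiset R, (∀ p ∈ m, Prime p) ∧ Associated m.prod s) :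
    S ≤ nonZeroDivisors R := fun s hs => by
  obtain ⟨m, hm, hprod⟩ := hS s hs
  exact mem_nonZeroDivisors_of_ne_zero
    (hprod.ne_zero_iff.mp (Multiset.prod_ne_zero fun h0 => (hm 0 h0).ne_zero rfl))

theorem exists_prime_associated_algebraMap [WfDvdMonoid R]
    (hS : ∀ s ∈ S, ∃ m : Multiset R, (∀ p ∈ m, Prime p) ∧ Associated m.prod s)
    {π : T} (hπ : Prime π) : ∃ x : R, Prime x ∧ Associated (algebraMap R T x) π := by
  have hinj := IsLocalization.injective T (le_nonZeroDivisors_of_exists_prime_factors hS)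
  have hne : {x : R | Associated (algebraMap R T x) π}.Nonempty := by
    obtain ⟨a, s, rfl⟩ := IsLocalization.exists_mk'_eq S π
    refine ⟨a, ?_⟩
    rw [Set.mem_ofPred_eq, ← IsLocalization.mk'_spec T a s]
    exact associated_mul_unit_left _ _ (IsLocalization.map_units T s)
  obtain ⟨x, hx, hmin⟩ := wellFounded_dvdNotUnit.has_min _ hne
  have hxT : Prime (algebraMap R T x) := hx.symm.prime hπ
  have hx0 : x ≠ 0 := by rintro rfl; exact hxT.ne_zero (map_zero _)
  -- a prime factor of `x` that is a unit in `T` could be stripped off, contradicting minimality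
  have hnd : ∀ p : R, Prime p → IsUnit (algebraMap R T p) → ¬ p ∣ x := by
    rintro p hp hpT ⟨y, rfl⟩
    refine hmin y ?_ ⟨right_ne_zero_of_mul hx0, p, hp.not_isUnit, mul_comm p y⟩
    rw [Set.mem_ofPred_eq, map_mul] at hx
    exact (associated_unit_mul_left _ _ hpT).symm.trans hx
  have descend : ∀ a : R, algebraMap R T x ∣ algebraMap R T a → x ∣ a := by
    rintro a ⟨z, hz⟩
    obtain ⟨y, s, rfl⟩ := IsLocalization.exists_mk'_eq S z
    have has : a * s = x * y := hinj <| by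
      rw [map_mul, map_mul, hz, mul_assoc, IsLocalization.mk'_spec]
    obtain ⟨m, hm, hprod⟩ := hS s s.2
    refine dvd_of_dvd_mul_multiset_prod (fun p hp => ⟨hm p hp, hnd p (hm p hp) ?_⟩)
      ((hprod.mul_left a).dvd_iff_dvd_right.mpr ⟨y, has⟩)
    exact isUnit_of_dvd_unit (map_dvd _ ((Multiset.dvd_prod hp).trans hprod.dvd))
      (IsLocalization.map_units T s)
  refine ⟨x, ⟨hx0, fun hu => hxT.not_isUnit (hu.map _), fun a b hab => ?_⟩, hx⟩
  have habT := map_dvd (algebraMap R T) hab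
  rw [map_mul] at habT
  exact (hxT.dvd_or_dvd habT).imp (descend a) (descend b)

variable (T) in
theorem UniqueFactorizationMonoid.of_isLocalization_of_exists_prime_factors [WfDvdMonoid R]
    [UniqueFactorizationMonoid T]
    (hS : ∀ s ∈ S, ∃ m : Multiset R, (∀ p ∈ m, Prime p) ∧ Associated m.prod s) :
    UniqueFactorizationMonoid R := by
  have hinj := IsLocalization.injective T (le_nonZeroDivisors_of_exists_prime_factors hS)
  refine UniqueFactorizationMonoid.iff_exists_prime_mem_of_isPrime.mpr fun P hP hPp => ?_
  by_cases hdisj : Disjoint (S : Set R) P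
  · have hQ := IsLocalization.isPrime_of_isPrime_disjoint S T P hPp hdisj
    obtain ⟨π, hπQ, hπ⟩ := hQ.exists_mem_prime_of_ne_bot
      ((Ideal.map_eq_bot_iff_of_injective hinj).not.mpr hP)
    obtain ⟨x, hx, hxπ⟩ := exists_prime_associated_algebraMap hS hπ
    refine ⟨x, ?_, hx⟩
    rw [← IsLocalization.under_map_of_isPrime_disjoint S T hPp hdisj, Ideal.mem_comap]
    exact (Ideal.mem_iff_of_associated hxπ).mpr hπQ
  · obtain ⟨s, hsS, hsP⟩ := Set.not_disjoint_iff.mp hdisj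
    obtain ⟨m, hm, hprod⟩ := hS s hsS
    obtain ⟨p, hpm, hpP⟩ := (hPp.multiset_prod_mem_iff_exists_mem m).mp
      ((Ideal.mem_iff_of_associated hprod).mpr hsP)
    exact ⟨p, hpP, hm p hpm⟩

end Nagata

theorem UniqueFactorizationMonoid.exists_prime_factors_map {M N F : Type*}
    [CommMonoidWithZero M] [CommMonoidWithZero N] [UniqueFactorizationMonoid M]
    [FunLike F M N] [MonoidHomClass F M N] (f : F) (hf : ∀ p, Prime p → Prime (f p))
    {b : M} (hb : b ≠ 0) :
    ∃ m : Multiset N, (∀ q ∈ m, Prime q) ∧ Associated m.prod (f b) := by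
  obtain ⟨m, hm, hprod⟩ := UniqueFactorizationMonoid.exists_prime_factors b hb
  refine ⟨m.map f, ?_, ?_⟩
  · simpa using fun p hp => hf p (hm p hp)
  · rw [← map_multiset_prod]
    exact hprod.map f

section TensorProduct

variable {A B C : Type*} [CommRing A] [CommRing B] [CommRing C] [Algebra A B] [Algebra A C]

theorem Algebra.TensorProduct.algebraMap_injective_of_isDomain [IsDomain B]
    [Nontrivial (FractionRing B ⊗[A] C)] : Function.Injective (algebraMap B (B ⊗[A] C)) := by
  let K := FractionRing B
  let φ := Algebra.TensorProduct.map (IsScalarTower.toAlgHom A B K) (AlgHom.id A C)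
  have hcomp : φ ∘ algebraMap B (B ⊗[A] C) = algebraMap K (K ⊗[A] C) ∘ algebraMap B K := by
    ext b
    simp [φ, Algebra.TensorProduct.algebraMap_apply]
  refine Function.Injective.of_comp (f := φ) ?_
  rw [hcomp]
  exact (algebraMap K _).injective.comp (IsFractionRing.injective B K)

variable [Module.Flat A C]

theorem Algebra.TensorProduct.map_id_injective_of_flat {B' : Type*} [CommRing B'] [Algebra A B']
    {f : B →ₐ[A] B'} (hf : Function.Injective f) :
    Function.Injective (Algebra.TensorProduct.map f (AlgHom.id A C)) :=
  Module.Flat.rTensor_preserves_injective_linearMap f.toLinearMap hf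

theorem Algebra.TensorProduct.isDomain_of_injective {B' : Type*} [CommRing B'] [Algebra A B']
    [IsDomain (B' ⊗[A] C)] {f : B →ₐ[A] B'} (hf : Function.Injective f) :
    IsDomain (B ⊗[A] C) :=
  (map_id_injective_of_flat (C := C) hf).isDomain (map f (AlgHom.id A C)).toRingHom

theorem Ideal.isPrime_map_algebraMap_tensorProduct {P : Ideal B}
    [IsDomain (FractionRing (B ⧸ P) ⊗[A] C)] :
    (P.map (algebraMap B (B ⊗[A] C))).IsPrime := by
  have : IsDomain ((B ⧸ P) ⊗[A] C) := Algebra.TensorProduct.isDomain_of_injective (A := A)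
    (f := IsScalarTower.toAlgHom A (B ⧸ P) (FractionRing (B ⧸ P)))
    (IsFractionRing.injective _ _)
  rw [← Ideal.Quotient.isDomain_iff_prime]
  let e := (Algebra.TensorProduct.quotientTensorEquiv (R := A) A C B P).symm
  exact e.injective.isDomain e.toRingHom

end TensorProduct

theorem Algebra.TensorProduct.prime_algebraMap {A B C : Type u} [CommRing A] [CommRing B]
    [CommRing C] [Algebra A B] [Algebra A C] [IsDomain B] [Module.Flat A C]
    (hdom : ∀ (K : Type u) [Field K] [Algebra A K], IsDomain (K ⊗[A] C))
    {p : B} (hp : Prime p) : Prime (algebraMap B (B ⊗[A] C) p) := by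
  have := (Ideal.span_singleton_prime hp.ne_zero).mpr hp
  have := hdom (FractionRing (B ⧸ Ideal.span {p}))
  have := hdom (FractionRing B)
  have hP := Ideal.isPrime_map_algebraMap_tensorProduct (A := A) (C := C) (P := Ideal.span {p})
  rw [Ideal.map_span, Set.image_singleton] at hP
  exact (Ideal.span_singleton_prime
    ((map_ne_zero_iff _ algebraMap_injective_of_isDomain).mpr hp.ne_zero)).mp hP

theorem ufd_tensor_general (A B C : Type u) [CommRing A] [CommRing B] [CommRing C]
    [Algebra A B] [Algebra A C]
    [IsNoetherianRing B] [IsDomain B] [UniqueFactorizationMonoid B]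
    [Module.Flat A C] [Algebra.FiniteType A C]
    (hdom : ∀ (K : Type u) [Field K] [Algebra A K], IsDomain (K ⊗[A] C))
    (hufd : ∀ (K : Type u) [Field K] [Algebra A K] [IsDomain (K ⊗[A] C)],
      UniqueFactorizationMonoid (K ⊗[A] C)) :
    ∃ h : IsDomain (B ⊗[A] C),
      UniqueFactorizationMonoid (B ⊗[A] C) := by
  let K := FractionRing B
  have := hdom K
  have := hufd K
  have : IsDomain (B ⊗[A] C) :=
    Algebra.TensorProduct.isDomain_of_injective (f := IsScalarTower.toAlgHom A B K)
      (IsFractionRing.injective B K)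
  have : IsNoetherianRing (B ⊗[A] C) := Algebra.FiniteType.isNoetherianRing B _
  let : Algebra (B ⊗[A] C) (K ⊗[A] C) :=
    (Algebra.TensorProduct.map (IsScalarTower.toAlgHom A B K) (AlgHom.id A C)).toAlgebra
  have : IsScalarTower B (B ⊗[A] C) (K ⊗[A] C) := .of_algebraMap_eq fun b => by
    simp [RingHom.algebraMap_toAlgebra, Algebra.TensorProduct.algebraMap_apply]
  have := IsLocalization.tensorProduct_tensorProduct A C (nonZeroDivisors B) K
    (by ext; simp [RingHom.algebraMap_toAlgebra])
  refine ⟨inferInstance, UniqueFactorizationMonoid.of_isLocalization_of_exists_prime_factors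
    (K ⊗[A] C) (S := Algebra.algebraMapSubmonoid (B ⊗[A] C) (nonZeroDivisors B)) ?_⟩
  rintro _ ⟨b, hb, rfl⟩
  exact UniqueFactorizationMonoid.exists_prime_factors_map _
    (fun _ => Algebra.TensorProduct.prime_algebraMap hdom) (nonZeroDivisors.ne_zero hb)

/-- **Proposition (UFD tensor products).** If `B` is a Noetherian UFD over `A`, `C` is a flat,
finitely generated `A`-algebra, and for every field `K` over `A` the tensor product `K ⊗[A] C`
is a UFD whose units come exactly from the nonzero elements of `K`, then `B ⊗[A] C` is a UFD. -/
theorem ufd_tensor (A B C : Type u) [CommRing A] [CommRing B] [CommRing C]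
    [Algebra A B] [Algebra A C]
    [IsNoetherianRing B] [IsDomain B] [UniqueFactorizationMonoid B]
    [Module.Flat A C] [Algebra.FiniteType A C]
    (hdom : ∀ (K : Type u) [Field K] [Algebra A K], IsDomain (K ⊗[A] C))
    (hufd : ∀ (K : Type u) [Field K] [Algebra A K] [IsDomain (K ⊗[A] C)],
      UniqueFactorizationMonoid (K ⊗[A] C))
    (hunits : ∀ (K : Type u) [Field K] [Algebra A K] (z : K ⊗[A] C),
      IsUnit z ↔ ∃ c : K, c ≠ 0 ∧ algebraMap K (K ⊗[A] C) c = z) :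
    ∃ h : IsDomain (B ⊗[A] C),
      UniqueFactorizationMonoid (B ⊗[A] C) :=
  ufd_tensor_general A B C hdom hufd
end

section
/- Let K be a field and let C₁ and C₂ be finitely generated K-algebras such that, for each i ∈ {1,2} and every field extension K′ of K, the tensor product K′ ⊗_K Cᵢ is a unique factorization domain whose units are exactly the images of the nonzero elements of K′. Then C₁ ⊗_K C₂ is a unique factorization domain. -/
/-!
Put `L = Frac C₂`. Since `C₂ ≅ K ⊗ C₂` is a UFD, every nonzero `c ∈ C₂` is a product of primes
`p`, and `1 ⊗ p` is prime in `C₁ ⊗ C₂` because `(C₁ ⊗ C₂) ⧸ (1 ⊗ p) ≅ C₁ ⊗ (C₂ ⧸ p)` embeds into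
the domain `C₁ ⊗ Frac(C₂ ⧸ p)`. Now `C₁ ⊗ L`, a UFD by hypothesis, is the localization of the
noetherian domain `C₁ ⊗ C₂` at the elements `1 ⊗ c`, so Nagata's criterion applies: an atomic
domain having a UFD as localization at a submonoid generated by primes is itself a UFD.
-/

open TensorProduct

universe u

section Nagata

variable {M N : Type*} [CommMonoidWithZero M] [IsCancelMulZero M]

theorem IsPrimal.dvd_of_isRelPrime_of_dvd_mul {s a x : M} (hs : IsPrimal s)
    (hsa : IsRelPrime s a) (h : a ∣ s * x) : a ∣ x := by
  obtain rfl | hs0 := eq_or_ne s 0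
  · exact (hsa (dvd_zero a) dvd_rfl).dvd
  obtain ⟨c, hc⟩ := h
  obtain ⟨d, rfl⟩ := hsa.dvd_of_dvd_mul_left_of_isPrimal ⟨x, hc.symm⟩ hs
  exact ⟨d, mul_left_cancel₀ hs0 (by rw [hc, mul_left_comm])⟩

theorem Irreducible.prime_of_dvd_multiset_prod {a : M} (ha : Irreducible a) {t : Multiset M}
    (ht : ∀ p ∈ t, Prime p) (h : a ∣ t.prod) : Prime a := by
  induction t using Multiset.induction_on with
  | empty => exact absurd (isUnit_of_dvd_one (by simpa using h)) ha.not_isUnit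
  | cons p t ih =>
    have hp : Prime p := ht p (Multiset.mem_cons_self p t)
    rw [Multiset.prod_cons] at h
    by_cases hpa : p ∣ a
    · exact (hp.irreducible.associated_of_dvd ha hpa).prime hp
    · exact ih (fun q hq => ht q (Multiset.mem_cons_of_mem hq))
        (hp.isPrimal.dvd_of_isRelPrime_of_dvd_mul (hp.irreducible.isRelPrime_iff_not_dvd.2 hpa) h)

theorem IsPrimal.of_associated_multiset_prod {s : M} {t : Multiset M} (ht : ∀ p ∈ t, Prime p)
    (hts : Associated t.prod s) : IsPrimal s := by
  obtain ⟨u, rfl⟩ := hts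
  exact ((Submonoid.isPrimal M).multiset_prod_mem t (ht · · |>.isPrimal)).mul u.isUnit.isPrimal

namespace Submonoid.LocalizationMap

variable [CommMonoidWithZero N] {S : Submonoid M} (f : S.LocalizationMap N)

theorem irreducible_map_of_forall_not_dvd (hS : ∀ s ∈ S, IsPrimal s) {a : M}
    (ha : Irreducible a) (haS : ∀ s ∈ S, ¬a ∣ s) : Irreducible (f a) := by
  have hinj : Function.Injective f := f.injective_iff.2 fun s hs =>
    IsRegular.of_ne_zero fun h0 => haS s hs (h0 ▸ dvd_zero a)
  refine ⟨fun hu => ?_, fun x y hxy => ?_⟩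
  · obtain ⟨s, hs, hdvd⟩ := f.map_isUnit_iff.1 hu
    exact haS s hs hdvd
  obtain ⟨⟨m₁, s₁⟩, hx⟩ := f.surj x
  obtain ⟨⟨m₂, s₂⟩, hy⟩ := f.surj y
  have hs : (s₁ * s₂ : M) ∈ S := mul_mem s₁.2 s₂.2
  have heq : (s₁ * s₂ : M) * a = m₁ * m₂ := hinj <| by
    rw [map_mul, map_mul, map_mul, hxy, ← hx, ← hy]; ac_rfl
  obtain ⟨e₁, e₂, ⟨b₁, rfl⟩, ⟨b₂, rfl⟩, he⟩ := hS _ hs ⟨a, heq.symm⟩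
  have hs0 : (s₁ * s₂ : M) ≠ 0 := fun h0 => haS _ hs (h0 ▸ dvd_zero a)
  have hab : a = b₁ * b₂ := mul_left_cancel₀ hs0 (by rw [heq, he]; ac_rfl)
  have hunit : ∀ e b, e ∣ (s₁ * s₂ : M) → IsUnit b → IsUnit (f (e * b)) := fun e b he hb =>
    (map_mul f e b).symm ▸ (f.map_isUnit_iff.2 ⟨_, hs, he⟩).mul (hb.map f)
  rcases ha.isUnit_or_isUnit hab with hb | hb
  · refine .inl (isUnit_of_mul_isUnit_left (y := f s₁) ?_)
    rw [hx]; exact hunit e₁ b₁ ⟨e₂, he⟩ hb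
  · refine .inr (isUnit_of_mul_isUnit_left (y := f s₂) ?_)
    rw [hy]; exact hunit e₂ b₂ ⟨e₁, by rw [he, mul_comm]⟩ hb

theorem prime_of_prime_map_of_forall_not_dvd (hS : ∀ s ∈ S, IsPrimal s) {a : M}
    (ha : Irreducible a) (haS : ∀ s ∈ S, ¬a ∣ s) (hfa : Prime (f a)) : Prime a := by
  have hsat : ∀ y, f a ∣ f y → a ∣ y := fun y hy => by
    obtain ⟨s, hs, hdvd⟩ := f.map_dvd_map.1 hy
    exact (hS s hs).dvd_of_isRelPrime_of_dvd_mul (ha.isRelPrime_iff_not_dvd.2 (haS s hs)).symm hdvd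
  refine ⟨ha.ne_zero, ha.not_isUnit, fun y z hyz => ?_⟩
  exact (hfa.dvd_or_dvd (map_mul f y z ▸ map_dvd f hyz)).imp (hsat y) (hsat z)

end Submonoid.LocalizationMap

/-- Nagata's criterion. -/
theorem UniqueFactorizationMonoid.of_localizationMap [CommMonoidWithZero N] [WfDvdMonoid M]
    {S : Submonoid M} (f : S.LocalizationMap N) [UniqueFactorizationMonoid N]
    (hS : ∀ s ∈ S, ∃ t : Multiset M, (∀ p ∈ t, Prime p) ∧ Associated t.prod s) :
    UniqueFactorizationMonoid M := by
  have hprimal : ∀ s ∈ S, IsPrimal s := fun s hs =>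
    have ⟨t, ht, hts⟩ := hS s hs
    .of_associated_multiset_prod ht hts
  refine { irreducible_iff_prime := fun {a} => ⟨fun ha => ?_, Prime.irreducible⟩ }
  by_cases haS : ∃ s ∈ S, a ∣ s
  · obtain ⟨s, hs, hdvd⟩ := haS
    obtain ⟨t, ht, hts⟩ := hS s hs
    exact ha.prime_of_dvd_multiset_prod ht (hts.dvd_iff_dvd_right.2 hdvd)
  · push Not at haS
    exact f.prime_of_prime_map_of_forall_not_dvd hprimal ha haS
      (UniqueFactorizationMonoid.irreducible_iff_prime.1
        (f.irreducible_map_of_forall_not_dvd hprimal ha haS))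

end Nagata

namespace Algebra.TensorProduct

section Flat

variable {R A C D : Type*} [CommRing R] [CommRing A] [CommRing C] [CommRing D]
  [Algebra R A] [Algebra R C] [Algebra R D]

theorem map_id_injective [Module.Flat R A] {g : C →ₐ[R] D} (hg : Function.Injective g) :
    Function.Injective (map (AlgHom.id R A) g) :=
  Module.Flat.lTensor_preserves_injective_linearMap g.toLinearMap hg

theorem isDomain_of_isDomain_fractionRing [Module.Flat R A] [IsDomain (A ⊗[R] FractionRing C)] :
    IsDomain (A ⊗[R] C) :=
  (map_id_injective (IsFractionRing.injective C (FractionRing C))).isDomain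
    (map (AlgHom.id R A) (IsScalarTower.toAlgHom R C (FractionRing C))).toRingHom

theorem isLocalizationMap_map_id (M : Submonoid C) (B : Type*) [CommRing B] [Algebra R B]
    [Algebra C B] [IsScalarTower R C B] [IsLocalization M B] :
    (M.map (includeRight : C →ₐ[R] A ⊗[R] C)).IsLocalizationMap
      (map (AlgHom.id R A) (IsScalarTower.toAlgHom R C B)) := by
  let _ := (map (AlgHom.id R A) (IsScalarTower.toAlgHom R C B)).toRingHom.toAlgebra
  have : IsScalarTower A (A ⊗[R] C) (A ⊗[R] B) := .of_algebraMap_eq fun a => by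
    simp [RingHom.algebraMap_toAlgebra]
  have := IsLocalization.tensorProduct_tensorProduct_right R A M B <| by
    ext c; simp [RingHom.algebraMap_toAlgebra]
  exact (isLocalization_iff_isLocalizationMap _ _).1 this

end Flat

section Field

variable {K A C : Type*} [Field K] [CommRing A] [CommRing C] [Algebra K A] [Algebra K C]

/-- The kernel of `A ⊗ C → A ⊗ Frac(C/p)` is `(1 ⊗ p)`: by right exactness for `C → C/p` and by
flatness over the field `K` for `C/p ↪ Frac(C/p)`. -/
theorem _root_.Prime.one_tmul {p : C} (hp : Prime p)
    [IsDomain (A ⊗[K] FractionRing (C ⧸ Ideal.span {p}))] : Prime ((1 : A) ⊗ₜ[K] p) := by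
  let I := Ideal.span {p}
  let F := FractionRing (C ⧸ I)
  have : Nontrivial A := (includeLeft : A →ₐ[K] A ⊗[K] F).toRingHom.domain_nontrivial
  have h0 : (1 : A) ⊗ₜ[K] p ≠ 0 := by
    rw [← includeRight_apply, ← map_zero includeRight]
    exact (includeRight_injective (algebraMap K A).injective).ne hp.ne_zero
  let q := map (AlgHom.id K A) (Ideal.Quotient.mkₐ K I)
  let ι := map (AlgHom.id K A) (IsScalarTower.toAlgHom K (C ⧸ I) F)
  have hι : Function.Injective ι := map_id_injective (IsFractionRing.injective _ F)
  have hI : RingHom.ker (Ideal.Quotient.mkₐ K I) = I := Ideal.Quotient.mkₐ_ker K I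
  have hker : RingHom.ker (ι.comp q) = Ideal.span {(1 : A) ⊗ₜ[K] p} := by
    ext x
    rw [RingHom.mem_ker, AlgHom.comp_apply, map_eq_zero_iff ι hι, ← RingHom.mem_ker,
      lTensor_ker _ (Ideal.Quotient.mkₐ_surjective K I), hI, Ideal.map_span, Set.image_singleton]
    rfl
  rw [← Ideal.span_singleton_prime h0, ← hker]
  exact RingHom.ker_isPrime _

theorem uniqueFactorizationMonoid_of_fractionRing [UniqueFactorizationMonoid C]
    [IsDomain (A ⊗[K] C)] [WfDvdMonoid (A ⊗[K] C)]
    [UniqueFactorizationMonoid (A ⊗[K] FractionRing C)]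
    (hquot : ∀ p : C, Prime p → IsDomain (A ⊗[K] FractionRing (C ⧸ Ideal.span {p}))) :
    UniqueFactorizationMonoid (A ⊗[K] C) := by
  have : Nontrivial C := (includeRight : C →ₐ[K] A ⊗[K] C).toRingHom.domain_nontrivial
  let ψ := map (AlgHom.id K A) (IsScalarTower.toAlgHom K C (FractionRing C))
  let f : ((nonZeroDivisors C).map (includeRight : C →ₐ[K] A ⊗[K] C)).LocalizationMap
      (A ⊗[K] FractionRing C) :=
    { ψ.toMonoidHom with isLocalizationMap := isLocalizationMap_map_id _ _ }
  refine .of_localizationMap f ?_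
  rintro _ ⟨c, hc, rfl⟩
  obtain ⟨t, ht, htc⟩ := UniqueFactorizationMonoid.exists_prime_factors c
    (nonZeroDivisors.ne_zero hc)
  refine ⟨t.map includeRight, ?_, ?_⟩
  · rw [Multiset.forall_mem_map_iff]
    intro p hp
    have := hquot p (ht p hp)
    exact (ht p hp).one_tmul
  · rw [← map_multiset_prod]
    exact htc.map includeRight

end Field

end Algebra.TensorProduct

theorem ufd_tensor_over_field_general (K C₁ C₂ : Type u) [Field K] [CommRing C₁] [CommRing C₂]
    [Algebra K C₁] [Algebra K C₂]
    [Algebra.FiniteType K C₁] [Algebra.FiniteType K C₂]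
    (hdom₁ : ∀ (K' : Type u) [Field K'] [Algebra K K'], IsDomain (K' ⊗[K] C₁))
    (hufd₁ : ∀ (K' : Type u) [Field K'] [Algebra K K'] [IsDomain (K' ⊗[K] C₁)],
      UniqueFactorizationMonoid (K' ⊗[K] C₁))
    (hdom₂ : ∀ (K' : Type u) [Field K'] [Algebra K K'], IsDomain (K' ⊗[K] C₂))
    (hufd₂ : ∀ (K' : Type u) [Field K'] [Algebra K K'] [IsDomain (K' ⊗[K] C₂)],
      UniqueFactorizationMonoid (K' ⊗[K] C₂)) :
    ∃ h : IsDomain (C₁ ⊗[K] C₂),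
      UniqueFactorizationMonoid (C₁ ⊗[K] C₂) := by
  have hdom : ∀ (F : Type u) [Field F] [Algebra K F], IsDomain (C₁ ⊗[K] F) := fun F _ _ =>
    have := hdom₁ F
    (Algebra.TensorProduct.comm K C₁ F).toMulEquiv.isDomain _
  have := hdom₂ K
  have : IsDomain C₂ := (Algebra.TensorProduct.lid K C₂).symm.toMulEquiv.isDomain _
  have : UniqueFactorizationMonoid C₂ :=
    (Algebra.TensorProduct.lid K C₂).toMulEquiv.uniqueFactorizationMonoid (hufd₂ K)
  have := hdom₁ (FractionRing C₂)
  have : UniqueFactorizationMonoid (C₁ ⊗[K] FractionRing C₂) :=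
    (Algebra.TensorProduct.comm K _ C₁).toMulEquiv.uniqueFactorizationMonoid (hufd₁ _)
  have := hdom (FractionRing C₂)
  have : IsDomain (C₁ ⊗[K] C₂) := Algebra.TensorProduct.isDomain_of_isDomain_fractionRing
  have : Algebra.FiniteType K (C₁ ⊗[K] C₂) := .trans (S := C₁) inferInstance inferInstance
  have : IsNoetherianRing (C₁ ⊗[K] C₂) := Algebra.FiniteType.isNoetherianRing K _
  refine ⟨inferInstance,
    Algebra.TensorProduct.uniqueFactorizationMonoid_of_fractionRing fun p hp => ?_⟩
  have : (Ideal.span {p}).IsPrime := (Ideal.span_singleton_prime hp.ne_zero).2 hp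
  exact hdom _

/-- **Corollary.** If `C₁`, `C₂` are finitely generated algebras over a field `K` such that for
every field extension `K'` of `K` the tensor products `K' ⊗[K] Cᵢ` are UFDs whose units come
exactly from the nonzero elements of `K'`, then `C₁ ⊗[K] C₂` is a UFD. -/
theorem ufd_tensor_over_field (K C₁ C₂ : Type u) [Field K] [CommRing C₁] [CommRing C₂]
    [Algebra K C₁] [Algebra K C₂]
    [Algebra.FiniteType K C₁] [Algebra.FiniteType K C₂]
    (hdom₁ : ∀ (K' : Type u) [Field K'] [Algebra K K'], IsDomain (K' ⊗[K] C₁))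
    (hufd₁ : ∀ (K' : Type u) [Field K'] [Algebra K K'] [IsDomain (K' ⊗[K] C₁)],
      UniqueFactorizationMonoid (K' ⊗[K] C₁))
    (hunits₁ : ∀ (K' : Type u) [Field K'] [Algebra K K'] (z : K' ⊗[K] C₁),
      IsUnit z ↔ ∃ c : K', c ≠ 0 ∧ algebraMap K' (K' ⊗[K] C₁) c = z)
    (hdom₂ : ∀ (K' : Type u) [Field K'] [Algebra K K'], IsDomain (K' ⊗[K] C₂))
    (hufd₂ : ∀ (K' : Type u) [Field K'] [Algebra K K'] [IsDomain (K' ⊗[K] C₂)],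
      UniqueFactorizationMonoid (K' ⊗[K] C₂))
    (hunits₂ : ∀ (K' : Type u) [Field K'] [Algebra K K'] (z : K' ⊗[K] C₂),
      IsUnit z ↔ ∃ c : K', c ≠ 0 ∧ algebraMap K' (K' ⊗[K] C₂) c = z) :
    ∃ h : IsDomain (C₁ ⊗[K] C₂),
      UniqueFactorizationMonoid (C₁ ⊗[K] C₂) :=
  ufd_tensor_over_field_general K C₁ C₂ hdom₁ hufd₁ hdom₂ hufd₂
end

section
/- Let A be a commutative ring, and let B and C be commutative A-algebras. Assume B is a Noetherian unique factorization domain, C is flat and finitely generated as an A-algebra, and for every field K that is an A-algebra, the tensor product K ⊗_A C is a unique factorization domain whose units are exactly the images of the nonzero elements of K. If x ∈ B is a prime element, then x ⊗ 1 is a prime element of B ⊗_A C. -/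
open TensorProduct

universe u

/-- If `f : B →ₐ[A] K` sends `x` to a nonzero element of the field `K`, and `K ⊗[A] C` is a
domain, then `x ⊗ 1 ≠ 0` in `B ⊗[A] C`. -/
theorem aux_tmul_one_ne_zero (A B C K : Type u) [CommRing A] [CommRing B] [CommRing C]
    [Field K] [Algebra A B] [Algebra A C] [Algebra A K] [IsDomain (K ⊗[A] C)]
    (f : B →ₐ[A] K) (x : B) (hfx : f x ≠ 0) : x ⊗ₜ[A] (1 : C) ≠ 0 := by
  intro h
  have h2 := congrArg (Algebra.TensorProduct.map f (AlgHom.id A C)) h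
  rw [map_zero, Algebra.TensorProduct.map_tmul, map_one] at h2
  have : algebraMap K (K ⊗[A] C) (f x) = 0 := by
    rw [Algebra.TensorProduct.algebraMap_apply]
    simpa using h2
  exact hfx ((map_eq_zero_iff (algebraMap K (K ⊗[A] C)) (RingHom.injective _)).mp this)

/-- If `f : B →ₐ[A] K` has kernel generated by `x`, `C` is flat over `A`, and `K ⊗[A] C`
is a domain, then the span of `x ⊗ 1` in `B ⊗[A] C` is a prime ideal. -/
theorem aux_span_isPrime (A B C K : Type u) [CommRing A] [CommRing B] [CommRing C]
    [Field K] [Algebra A B] [Algebra A C] [Algebra A K] [Module.Flat A C]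
    [IsDomain (K ⊗[A] C)] (f : B →ₐ[A] K) (x : B)
    (hker : RingHom.ker f = Ideal.span {x}) :
    (Ideal.span {x ⊗ₜ[A] (1 : C)}).IsPrime := by
  set I : Ideal B := RingHom.ker f with hI
  let g : B →ₐ[A] B ⧸ I := Ideal.Quotient.mkₐ A I
  let h : (B ⧸ I) →ₐ[A] K := Ideal.kerLiftAlg f
  have hinj : Function.Injective (Algebra.TensorProduct.map h (AlgHom.id A C)) := by
    have : Function.Injective (LinearMap.rTensor C h.toLinearMap) :=
      Module.Flat.rTensor_preserves_injective_linearMap h.toLinearMap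
        (Ideal.kerLiftAlg_injective f)
    exact this
  let φ : B ⊗[A] C →ₐ[A] K ⊗[A] C :=
    (Algebra.TensorProduct.map h (AlgHom.id A C)).comp
      (Algebra.TensorProduct.map g (AlgHom.id A C))
  have hkerg : RingHom.ker (Algebra.TensorProduct.map g (AlgHom.id A C)) =
      Ideal.span {x ⊗ₜ[A] (1 : C)} := by
    rw [Algebra.TensorProduct.rTensor_ker g (Ideal.Quotient.mkₐ_surjective A I)]
    have hg : RingHom.ker g = I := Ideal.Quotient.mkₐ_ker A I
    rw [hg, hker, Ideal.map_span]
    simp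
  have hkerφ : RingHom.ker (φ : B ⊗[A] C →+* K ⊗[A] C) =
      Ideal.span {x ⊗ₜ[A] (1 : C)} := by
    rw [← hkerg]
    ext z
    simp only [RingHom.mem_ker]
    constructor
    · intro hz
      have : (Algebra.TensorProduct.map h (AlgHom.id A C))
          ((Algebra.TensorProduct.map g (AlgHom.id A C)) z) =
          (Algebra.TensorProduct.map h (AlgHom.id A C)) 0 := by
        simpa [φ] using hz
      exact hinj this
    · intro hz
      simp [φ, AlgHom.comp_apply, hz]
  exact hkerφ ▸ RingHom.ker_isPrime _

/-- Under the hypotheses of the UFD tensor product proposition, if `x ∈ B` is prime, then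
`x ⊗ 1` is prime in `B ⊗[A] C`. -/
theorem prime_tmul_one (A B C : Type u) [CommRing A] [CommRing B] [CommRing C]
    [Algebra A B] [Algebra A C]
    [IsNoetherianRing B] [IsDomain B] [UniqueFactorizationMonoid B]
    [Module.Flat A C] [Algebra.FiniteType A C]
    (hdom : ∀ (K : Type u) [Field K] [Algebra A K], IsDomain (K ⊗[A] C))
    (hufd : ∀ (K : Type u) [Field K] [Algebra A K] [IsDomain (K ⊗[A] C)],
      UniqueFactorizationMonoid (K ⊗[A] C))
    (hunits : ∀ (K : Type u) [Field K] [Algebra A K] (z : K ⊗[A] C),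
      IsUnit z ↔ ∃ c : K, c ≠ 0 ∧ algebraMap K (K ⊗[A] C) c = z)
    (x : B) (hx : Prime x) :
    Prime (x ⊗ₜ[A] (1 : C)) := by
  classical
  have hxne : x ≠ 0 := hx.ne_zero
  -- Step 1: `x ⊗ 1 ≠ 0`, via the fraction field of `B`.
  have hne : (x ⊗ₜ[A] (1 : C)) ≠ 0 := by
    letI : Algebra A (FractionRing B) :=
      ((algebraMap B (FractionRing B)).comp (algebraMap A B)).toAlgebra
    haveI := hdom (FractionRing B)
    let f₀ : B →ₐ[A] FractionRing B :=
      { toRingHom := algebraMap B (FractionRing B), commutes' := fun a => rfl }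
    have hfx : f₀ x ≠ 0 := by
      intro h'
      exact hxne (IsFractionRing.injective B (FractionRing B) (by simpa [f₀] using h'))
    exact aux_tmul_one_ne_zero A B C (FractionRing B) f₀ x hfx
  -- Step 2: the span of `x ⊗ 1` is a prime ideal, via the fraction field of `B ⧸ (x)`.
  set I : Ideal B := Ideal.span {x} with hIdef
  haveI hI : I.IsPrime := (Ideal.span_singleton_prime hxne).mpr hx
  letI : Algebra A (FractionRing (B ⧸ I)) :=
    ((algebraMap (B ⧸ I) (FractionRing (B ⧸ I))).comp (algebraMap A (B ⧸ I))).toAlgebra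
  haveI := hdom (FractionRing (B ⧸ I))
  let g : B →ₐ[A] B ⧸ I := Ideal.Quotient.mkₐ A I
  let h : (B ⧸ I) →ₐ[A] FractionRing (B ⧸ I) :=
    { toRingHom := algebraMap (B ⧸ I) (FractionRing (B ⧸ I)), commutes' := fun a => rfl }
  let f : B →ₐ[A] FractionRing (B ⧸ I) := h.comp g
  have hker : RingHom.ker f = I := by
    ext z
    simp only [RingHom.mem_ker]
    constructor
    · intro hz
      have : h (g z) = h 0 := by simpa [f] using hz
      have hz0 : g z = 0 := IsFractionRing.injective (B ⧸ I) (FractionRing (B ⧸ I)) this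
      simpa [g, Ideal.Quotient.eq_zero_iff_mem] using hz0
    · intro hz
      have : g z = 0 := by simpa [g, Ideal.Quotient.eq_zero_iff_mem] using hz
      simp [f, this]
  have hprime : (Ideal.span {x ⊗ₜ[A] (1 : C)}).IsPrime :=
    aux_span_isPrime A B C (FractionRing (B ⧸ I)) f x (by rw [hker, hIdef])
  exact (Ideal.span_singleton_prime hne).mp hprime
end

section
/- Let A be a commutative ring, and let B and C be commutative A-algebras. Assume B is a Noetherian unique factorization domain, C is flat and finitely generated as an A-algebra, and for every field K that is an A-algebra, the tensor product K ⊗_A C is a unique factorization domain whose units are exactly the images of the nonzero elements of K. If x ∈ B is a prime element and y ∈ B, then x divides y in B if and only if x ⊗ 1 divides y ⊗ 1 in B ⊗_A C. -/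
/-!
Base change along `B → κ(x)`, the residue field of the prime `(x)`, sends `x ⊗ 1` to `0`, so a
divisibility `x ⊗ 1 ∣ y ⊗ 1` forces `y ⊗ 1 = 0` in `κ(x) ⊗[A] C`. This ring is nonzero, so the
field `κ(x)` embeds into it, whence `y ↦ 0` in `κ(x)`, i.e. `y ∈ (x)`.
-/

open TensorProduct

universe u

section

variable {A B C : Type*} [CommRing A] [CommRing B] [CommRing C] [Algebra A B] [Algebra A C]

theorem tmul_one_eq_zero_iff {K : Type*} [Field K] [Algebra A K] [Nontrivial (K ⊗[A] C)]
    (k : K) : k ⊗ₜ[A] (1 : C) = 0 ↔ k = 0 := by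
  have : algebraMap K (K ⊗[A] C) k = k ⊗ₜ 1 := Algebra.TensorProduct.algebraMap_apply k
  rw [← this]
  exact map_eq_zero_iff _ (algebraMap K (K ⊗[A] C)).injective

theorem mem_of_tmul_one_dvd_tmul_one {P : Ideal B} [P.IsPrime]
    [Nontrivial (P.ResidueField ⊗[A] C)] {x y : B} (hx : x ∈ P)
    (h : x ⊗ₜ[A] (1 : C) ∣ y ⊗ₜ[A] (1 : C)) : y ∈ P := by
  let f := Algebra.TensorProduct.map (IsScalarTower.toAlgHom A B P.ResidueField) (AlgHom.id A C)
  have hfx : f (x ⊗ₜ 1) = 0 := by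
    simp [f, Ideal.algebraMap_residueField_eq_zero.mpr hx]
  have hfy : algebraMap B P.ResidueField y ⊗ₜ[A] (1 : C) = 0 := by
    simpa [f, hfx] using map_dvd f h
  rwa [tmul_one_eq_zero_iff, Ideal.algebraMap_residueField_eq_zero] at hfy

end

theorem dvd_iff_tmul_one_dvd_general (A B C : Type u) [CommRing A] [CommRing B] [CommRing C]
    [Algebra A B] [Algebra A C]
    (hdom : ∀ (K : Type u) [Field K] [Algebra A K], IsDomain (K ⊗[A] C))
    (x : B) (hx : Prime x) (y : B) :
    x ∣ y ↔ (x ⊗ₜ[A] (1 : C)) ∣ (y ⊗ₜ[A] (1 : C)) := by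
  refine ⟨map_dvd (Algebra.TensorProduct.includeLeft (S := A)), fun h => ?_⟩
  have := Ideal.isPrime_span_singleton_of_prime hx
  have := (hdom (Ideal.span {x}).ResidueField).toNontrivial
  exact Ideal.mem_span_singleton.mp
    (mem_of_tmul_one_dvd_tmul_one (Ideal.mem_span_singleton_self x) h)

/-- Under the hypotheses of the UFD tensor product proposition, if `x ∈ B` is prime and `y ∈ B`,
then `x ∣ y` in `B` if and only if `x ⊗ 1 ∣ y ⊗ 1` in `B ⊗[A] C`. -/
theorem dvd_iff_tmul_one_dvd (A B C : Type u) [CommRing A] [CommRing B] [CommRing C]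
    [Algebra A B] [Algebra A C]
    [IsNoetherianRing B] [IsDomain B] [UniqueFactorizationMonoid B]
    [Module.Flat A C] [Algebra.FiniteType A C]
    (hdom : ∀ (K : Type u) [Field K] [Algebra A K], IsDomain (K ⊗[A] C))
    (hufd : ∀ (K : Type u) [Field K] [Algebra A K] [IsDomain (K ⊗[A] C)],
      UniqueFactorizationMonoid (K ⊗[A] C))
    (hunits : ∀ (K : Type u) [Field K] [Algebra A K] (z : K ⊗[A] C),
      IsUnit z ↔ ∃ c : K, c ≠ 0 ∧ algebraMap K (K ⊗[A] C) c = z)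
    (x : B) (hx : Prime x) (y : B) :
    x ∣ y ↔ (x ⊗ₜ[A] (1 : C)) ∣ (y ⊗ₜ[A] (1 : C)) :=
  dvd_iff_tmul_one_dvd_general A B C hdom x hx y
end

section
/- Let A be a commutative ring, and let B and C be commutative A-algebras. Assume B is a Noetherian unique factorization domain, C is flat and finitely generated as an A-algebra, and for every field K that is an A-algebra, the tensor product K ⊗_A C is a unique factorization domain whose units are exactly the images of the nonzero elements of K. If x ∈ B is such that x ⊗ 1 is irreducible in B ⊗_A C, then x is irreducible in B, and x ⊗ 1 is a prime element of B ⊗_A C. -/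
set_option maxHeartbeats 1000000


open TensorProduct

universe u

/-- Under the hypotheses of the UFD tensor product proposition, if `x ⊗ 1` is irreducible in
`B ⊗[A] C`, then `x` is irreducible in `B` and `x ⊗ 1` is prime in `B ⊗[A] C`. -/
theorem irreducible_tmul_one (A B C : Type u) [CommRing A] [CommRing B] [CommRing C]
    [Algebra A B] [Algebra A C]
    [IsNoetherianRing B] [IsDomain B] [UniqueFactorizationMonoid B]
    [Module.Flat A C] [Algebra.FiniteType A C]
    (hdom : ∀ (K : Type u) [Field K] [Algebra A K], IsDomain (K ⊗[A] C))
    (hufd : ∀ (K : Type u) [Field K] [Algebra A K] [IsDomain (K ⊗[A] C)],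
      UniqueFactorizationMonoid (K ⊗[A] C))
    (hunits : ∀ (K : Type u) [Field K] [Algebra A K] (z : K ⊗[A] C),
      IsUnit z ↔ ∃ c : K, c ≠ 0 ∧ algebraMap K (K ⊗[A] C) c = z)
    (x : B) (hx : Irreducible (x ⊗ₜ[A] (1 : C))) :
    Irreducible x ∧ Prime (x ⊗ₜ[A] (1 : C)) := by
  have hx0 : x ≠ 0 := by
    rintro rfl
    rw [TensorProduct.zero_tmul] at hx
    exact not_irreducible_zero hx
  -- `b ⊗ 1` unit implies `b` unit
  have key : ∀ b : B, IsUnit (b ⊗ₜ[A] (1 : C)) → IsUnit b := by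
    intro b hb
    by_contra hbu
    obtain ⟨m, hm, hbm⟩ := exists_max_ideal_of_mem_nonunits (mem_nonunits_iff.2 hbu)
    letI : Field (B ⧸ m) := Ideal.Quotient.field m
    haveI := hdom (B ⧸ m)
    have := hb.map (Algebra.TensorProduct.map (Ideal.Quotient.mkₐ A m) (AlgHom.id A C))
    rw [Algebra.TensorProduct.map_tmul, AlgHom.coe_id, id_eq, Ideal.Quotient.mkₐ_eq_mk,
      Ideal.Quotient.eq_zero_iff_mem.2 hbm, TensorProduct.zero_tmul] at this
    exact not_isUnit_zero this
  have hxirr : Irreducible x := by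
    refine ⟨fun h => hx.not_isUnit ?_, fun a b hab => ?_⟩
    · exact h.map (Algebra.TensorProduct.includeLeft : B →ₐ[A] B ⊗[A] C)
    · have : x ⊗ₜ[A] (1 : C) = (a ⊗ₜ[A] (1 : C)) * (b ⊗ₜ[A] (1 : C)) := by
        rw [Algebra.TensorProduct.tmul_mul_tmul, mul_one, hab]
      rcases hx.isUnit_or_isUnit this with h | h
      · exact Or.inl (key a h)
      · exact Or.inr (key b h)
  refine ⟨hxirr, ?_⟩
  -- now primality
  have hxp : Prime x := hxirr.prime
  haveI : (Ideal.span {x}).IsPrime := (Ideal.span_singleton_prime hx0).2 hxp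
  set D := B ⧸ Ideal.span {x} with hD
  letI : IsDomain D := Ideal.Quotient.isDomain _
  set K := FractionRing D with hK
  haveI := hdom K
  -- D ⊗ C is a domain
  let g : D →ₐ[A] K := IsScalarTower.toAlgHom A D K
  have hginj : Function.Injective g := IsFractionRing.injective D K
  have hinj : Function.Injective (Algebra.TensorProduct.map g (AlgHom.id A C)) := by
    have : (Algebra.TensorProduct.map g (AlgHom.id A C)).toLinearMap
        = LinearMap.rTensor C g.toLinearMap := by
      rfl
    have h2 := Module.Flat.rTensor_preserves_injective_linearMap (M := C)
      g.toLinearMap hginj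
    rw [← this] at h2
    exact h2
  haveI : IsDomain (D ⊗[A] C) :=
    Function.Injective.isDomain (Algebra.TensorProduct.map g (AlgHom.id A C)).toRingHom hinj
  -- kernel computation
  let f : B →ₐ[A] D := Ideal.Quotient.mkₐ A (Ideal.span {x})
  have hker : RingHom.ker (Algebra.TensorProduct.map f (AlgHom.id A C))
      = Ideal.span {x ⊗ₜ[A] (1 : C)} := by
    rw [Algebra.TensorProduct.rTensor_ker f (Ideal.Quotient.mkₐ_surjective A _)]
    have : RingHom.ker f = Ideal.span {x} := Ideal.mk_ker
    rw [this, Ideal.map_span]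
    simp
  have hprime : (Ideal.span {x ⊗ₜ[A] (1 : C)}).IsPrime := by
    rw [← hker]
    exact RingHom.ker_isPrime _
  have hne : x ⊗ₜ[A] (1 : C) ≠ 0 := hx.ne_zero
  exact (Ideal.span_singleton_prime hne).1 hprime
end

section
/- Let A be a commutative ring, and let B and C be commutative A-algebras. Assume B is a Noetherian unique factorization domain, C is flat and finitely generated as an A-algebra, and for every field K that is an A-algebra, the tensor product K ⊗_A C is a unique factorization domain whose units are exactly the images of the nonzero elements of K. Let K denote the field of fractions of B. If x is an irreducible element of B ⊗_A C whose image in K ⊗_A C is a unit, then there exists y ∈ B such that x = y ⊗ 1, and x is a prime element of B ⊗_A C. -/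
open TensorProduct

universe u
set_option maxHeartbeats 1000000
set_option synthInstance.maxHeartbeats 400000

lemma mapInj (A C : Type u) [CommRing A] [CommRing C] [Algebra A C] [Module.Flat A C]
    (R S : Type u) [CommRing R] [CommRing S] [Algebra A R] [Algebra A S]
    (f : R →ₐ[A] S) (hf : Function.Injective f) :
    Function.Injective (Algebra.TensorProduct.map f (AlgHom.id A C)) := by
  have h : (Algebra.TensorProduct.map f (AlgHom.id A C)).toLinearMap
      = LinearMap.rTensor C f.toLinearMap := by
    ext r c; simp
  have := Module.Flat.rTensor_preserves_injective_linearMap (M := C) f.toLinearMap hf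
  rw [← h] at this
  exact this

lemma auxPrime (A B C K : Type u) [CommRing A] [CommRing B] [CommRing C]
    [Algebra A B] [Algebra A C] [IsDomain B]
    [Module.Flat A C]
    [Field K] [Algebra B K] [IsFractionRing B K] [Algebra A K] [IsScalarTower A B K]
    (hdom : ∀ (L : Type u) [Field L] [Algebra A L], IsDomain (L ⊗[A] C))
    (q : B) (hq : Prime q) :
    Prime (q ⊗ₜ[A] (1 : C) : B ⊗[A] C) ∧
      ∀ b : B, (q ⊗ₜ[A] (1 : C) : B ⊗[A] C) ∣ b ⊗ₜ[A] (1 : C) → q ∣ b := by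
  haveI hKC : IsDomain (K ⊗[A] C) := hdom K
  set P : Ideal B := Ideal.span {q} with hP
  haveI hPprime : P.IsPrime := (Ideal.span_singleton_prime hq.ne_zero).mpr hq
  letI Q := B ⧸ P
  haveI : IsDomain Q := inferInstance
  letI F := FractionRing Q
  haveI : IsDomain (F ⊗[A] C) := hdom F
  haveI : Nontrivial (F ⊗[A] C) := inferInstance
  haveI : NoZeroDivisors (F ⊗[A] C) := by exact IsDomain.to_noZeroDivisors (F ⊗[A] C)
  -- maps
  let π : B ⊗[A] C →ₐ[A] Q ⊗[A] C :=
    Algebra.TensorProduct.map (Ideal.Quotient.mkₐ A P) (AlgHom.id A C)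
  let ψ : Q ⊗[A] C →ₐ[A] F ⊗[A] C :=
    Algebra.TensorProduct.map (IsScalarTower.toAlgHom A Q F) (AlgHom.id A C)
  have hψ : Function.Injective ψ :=
    mapInj A C Q F _ (IsFractionRing.injective Q F)
  -- kernel description
  have hexact : Function.Exact ((P.restrictScalars A).subtype)
      ((Ideal.Quotient.mkₐ A P).toLinearMap) := by
    intro y
    constructor
    · intro hy
      have : y ∈ P := by
        rwa [AlgHom.toLinearMap_apply, Ideal.Quotient.mkₐ_eq_mk,
          Ideal.Quotient.eq_zero_iff_mem] at hy
      exact ⟨⟨y, this⟩, rfl⟩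
    · rintro ⟨⟨z, hz⟩, rfl⟩
      simpa [Ideal.Quotient.eq_zero_iff_mem] using hz
  have hsurj : Function.Surjective ((Ideal.Quotient.mkₐ A P).toLinearMap) :=
    Ideal.Quotient.mk_surjective
  have hTexact := rTensor_exact (C) hexact hsurj
  have hπlin : ∀ z : B ⊗[A] C,
      π z = LinearMap.rTensor C (Ideal.Quotient.mkₐ A P).toLinearMap z := by
    intro z
    have h : π.toLinearMap = LinearMap.rTensor C (Ideal.Quotient.mkₐ A P).toLinearMap := by
        ext r c; simp [π]; rfl
    exact LinearMap.congr_fun h z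
  have hker : ∀ z : B ⊗[A] C, π z = 0 → (q ⊗ₜ[A] (1 : C)) ∣ z := by
    intro z hz
    rw [hπlin] at hz
    obtain ⟨w, hw⟩ := (hTexact z).mp hz
    -- w : (P.restrictScalars A) ⊗ C
    clear hz
    induction w using TensorProduct.induction_on generalizing z with
    | zero =>
      refine ⟨0, by simp [← hw]⟩
    | tmul r c =>
      obtain ⟨r, hr⟩ := r
      have hr' : r ∈ Ideal.span {q} := hr
      rw [Ideal.mem_span_singleton] at hr'
      obtain ⟨t, rfl⟩ := hr'
      refine ⟨t ⊗ₜ[A] c, ?_⟩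
      rw [← hw]
      simp [Algebra.TensorProduct.tmul_mul_tmul, mul_comm]
    | add w₁ w₂ ih₁ ih₂ =>
      obtain ⟨u₁, hu₁⟩ := ih₁ _ rfl
      obtain ⟨u₂, hu₂⟩ := ih₂ _ rfl
      refine ⟨u₁ + u₂, ?_⟩
      rw [← hw, map_add, hu₁, hu₂, mul_add]
  have hπq : π (q ⊗ₜ[A] (1 : C)) = 0 := by
    have : Ideal.Quotient.mk P q = 0 := by
      rw [Ideal.Quotient.eq_zero_iff_mem]
      exact Ideal.subset_span rfl
    show (Ideal.Quotient.mkₐ A P) q ⊗ₜ[A] (1:C) = 0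
    rw [show (Ideal.Quotient.mkₐ A P) q = 0 from this, TensorProduct.zero_tmul]
  -- q ⊗ 1 is nonzero
  let φ : B ⊗[A] C →ₐ[A] K ⊗[A] C :=
    Algebra.TensorProduct.map (IsScalarTower.toAlgHom A B K) (AlgHom.id A C)
  have hφ : Function.Injective φ :=
    mapInj A C B K _ (IsFractionRing.injective B K)
  have hq0 : (q ⊗ₜ[A] (1 : C) : B ⊗[A] C) ≠ 0 := by
    intro h
    have h2 : φ (q ⊗ₜ[A] (1 : C)) = 0 := by rw [h, map_zero]
    have h3 : φ (q ⊗ₜ[A] (1 : C)) = algebraMap K (K ⊗[A] C) (algebraMap B K q) := by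
      simp [φ, Algebra.TensorProduct.algebraMap_apply]
    rw [h3] at h2
    have h4 : algebraMap B K q = 0 :=
      (algebraMap K (K ⊗[A] C)).injective (h2.trans (map_zero _).symm)
    exact hq.ne_zero (IsFractionRing.injective B K (by rw [h4, map_zero]))
  have hθker : ∀ z : B ⊗[A] C, ψ (π z) = 0 ↔ (q ⊗ₜ[A] (1 : C)) ∣ z := by
    intro z
    constructor
    · intro h
      exact hker z (hψ (by rw [h, map_zero]))
    · rintro ⟨w, rfl⟩
      rw [map_mul, map_mul, hπq, map_zero, zero_mul]
  have hqnu : ¬ IsUnit (q ⊗ₜ[A] (1 : C) : B ⊗[A] C) := by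
    intro h
    obtain ⟨w, hw⟩ := h.exists_right_inv
    have : ψ (π (1 : B ⊗[A] C)) = 0 := by
      rw [← hw]
      exact (hθker _).mpr ⟨w, rfl⟩
    rw [map_one, map_one] at this
    exact one_ne_zero (α := F ⊗[A] C) this
  have hprime : Prime (q ⊗ₜ[A] (1 : C) : B ⊗[A] C) := by
    refine ⟨hq0, hqnu, ?_⟩
    intro a b hab
    have h0 : ψ (π a) * ψ (π b) = 0 := by
      rw [← map_mul, ← map_mul]
      exact (hθker _).mpr hab
    rcases mul_eq_zero.mp h0 with h | h
    · exact Or.inl ((hθker a).mp h)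
    · exact Or.inr ((hθker b).mp h)
  refine ⟨hprime, ?_⟩
  intro b hb
  have h0 : ψ (π (b ⊗ₜ[A] (1 : C))) = 0 := (hθker _).mpr hb
  have h1 : ψ (π (b ⊗ₜ[A] (1 : C)))
      = algebraMap F (F ⊗[A] C) (algebraMap Q F (Ideal.Quotient.mk P b)) := by
    simp [ψ, π, Algebra.TensorProduct.algebraMap_apply]
    rfl
  rw [h1] at h0
  have h2 : algebraMap Q F (Ideal.Quotient.mk P b) = 0 :=
    (algebraMap F (F ⊗[A] C)).injective (h0.trans (map_zero _).symm)
  have h3 : Ideal.Quotient.mk P b = 0 := IsFractionRing.injective Q F (by rw [h2, map_zero])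
  rw [Ideal.Quotient.eq_zero_iff_mem] at h3
  exact Ideal.mem_span_singleton.mp h3

/-- Under the hypotheses of the UFD tensor product proposition, with `K` the fraction field of
`B`, if `x` is irreducible in `B ⊗[A] C` and its image in `K ⊗[A] C` is a unit, then `x = y ⊗ 1`
for some `y ∈ B`, and `x` is prime in `B ⊗[A] C`. -/
theorem irreducible_unit_image (A B C K : Type u) [CommRing A] [CommRing B] [CommRing C]
    [Algebra A B] [Algebra A C]
    [IsNoetherianRing B] [IsDomain B] [UniqueFactorizationMonoid B]
    [Module.Flat A C] [Algebra.FiniteType A C]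
    [Field K] [Algebra B K] [IsFractionRing B K] [Algebra A K] [IsScalarTower A B K]
    (hdom : ∀ (L : Type u) [Field L] [Algebra A L], IsDomain (L ⊗[A] C))
    (hufd : ∀ (L : Type u) [Field L] [Algebra A L] [IsDomain (L ⊗[A] C)],
      UniqueFactorizationMonoid (L ⊗[A] C))
    (hunits : ∀ (L : Type u) [Field L] [Algebra A L] (z : L ⊗[A] C),
      IsUnit z ↔ ∃ c : L, c ≠ 0 ∧ algebraMap L (L ⊗[A] C) c = z)
    (x : B ⊗[A] C) (hx : Irreducible x)
    (hu : IsUnit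
      ((Algebra.TensorProduct.map (IsScalarTower.toAlgHom A B K) (AlgHom.id A C)) x)) :
    (∃ y : B, x = y ⊗ₜ[A] (1 : C)) ∧ Prime x := by
  haveI hKC : IsDomain (K ⊗[A] C) := hdom K
  set φ : B ⊗[A] C →ₐ[A] K ⊗[A] C :=
    Algebra.TensorProduct.map (IsScalarTower.toAlgHom A B K) (AlgHom.id A C) with hφdef
  have hφ : Function.Injective φ :=
    mapInj A C B K _ (IsFractionRing.injective B K)
  haveI : IsDomain (B ⊗[A] C) := Function.Injective.isDomain φ.toRingHom hφ
  haveI : NoZeroDivisors (B ⊗[A] C) := by exact IsDomain.to_noZeroDivisors (B ⊗[A] C)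
  have hφt : ∀ b : B, φ (b ⊗ₜ[A] (1 : C)) = algebraMap K (K ⊗[A] C) (algebraMap B K b) := by
    intro b
    simp [hφdef, Algebra.TensorProduct.algebraMap_apply]
  -- extract the fraction
  obtain ⟨c, hc0, hc⟩ := (hunits K (φ x)).mp hu
  obtain ⟨⟨b, s⟩, hs⟩ := IsLocalization.surj (nonZeroDivisors B) c
  have hsne : (s : B) ≠ 0 := nonZeroDivisors.coe_ne_zero s
  have key : x * ((s : B) ⊗ₜ[A] (1 : C)) = b ⊗ₜ[A] (1 : C) := by
    apply hφ
    rw [map_mul, ← hc, hφt, hφt, ← map_mul, hs]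
  -- tmul arithmetic helper
  have tm : ∀ (r t : B), (r ⊗ₜ[A] (1 : C) : B ⊗[A] C) * (t ⊗ₜ[A] (1 : C))
      = (r * t) ⊗ₜ[A] (1 : C) := by
    intro r t
    rw [Algebra.TensorProduct.tmul_mul_tmul, mul_one]
  -- induction on s
  have main : ∀ s' : B, s' ≠ 0 → ∀ b' : B,
      x * (s' ⊗ₜ[A] (1 : C)) = b' ⊗ₜ[A] (1 : C) → ∃ y : B, x = y ⊗ₜ[A] (1 : C) := by
    intro s'
    induction s' using UniqueFactorizationMonoid.induction_on_prime with
    | h₁ => intro h; exact absurd rfl h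
    | h₂ a ha =>
      intro _ b' hb'
      obtain ⟨u, rfl⟩ := ha
      refine ⟨b' * ↑u⁻¹, ?_⟩
      have h1 : ((u : B) * ↑u⁻¹) = 1 := Units.mul_inv u
      calc x = x * (((u : B) * ↑u⁻¹) ⊗ₜ[A] (1 : C)) := by
              rw [h1]
              rw [show ((1 : B) ⊗ₜ[A] (1 : C) : B ⊗[A] C) = 1 from rfl, mul_one]
        _ = x * (((u : B) ⊗ₜ[A] (1 : C)) * ((↑u⁻¹ : B) ⊗ₜ[A] (1 : C))) := by rw [tm]
        _ = (x * ((u : B) ⊗ₜ[A] (1 : C))) * ((↑u⁻¹ : B) ⊗ₜ[A] (1 : C)) := by ring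
        _ = (b' ⊗ₜ[A] (1 : C)) * ((↑u⁻¹ : B) ⊗ₜ[A] (1 : C)) := by rw [hb']
        _ = (b' * ↑u⁻¹) ⊗ₜ[A] (1 : C) := tm _ _
    | h₃ a p ha hp ih =>
      intro _ b' hb'
      have hps := auxPrime A B C K hdom p hp
      have hdvd : (p ⊗ₜ[A] (1 : C) : B ⊗[A] C) ∣ b' ⊗ₜ[A] (1 : C) := by
        refine ⟨x * (a ⊗ₜ[A] (1 : C)), ?_⟩
        rw [← hb', ← tm]
        ring
      obtain ⟨b'', rfl⟩ := hps.2 b' hdvd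
      have hcancel : x * (a ⊗ₜ[A] (1 : C)) = b'' ⊗ₜ[A] (1 : C) := by
        apply mul_left_cancel₀ hps.1.ne_zero
        calc (p ⊗ₜ[A] (1 : C) : B ⊗[A] C) * (x * (a ⊗ₜ[A] (1 : C)))
            = x * (((p ⊗ₜ[A] (1 : C)) : B ⊗[A] C) * (a ⊗ₜ[A] (1 : C))) := by ring
          _ = x * ((p * a) ⊗ₜ[A] (1 : C)) := by rw [tm]
          _ = (p * b'') ⊗ₜ[A] (1 : C) := hb'
          _ = (p ⊗ₜ[A] (1 : C)) * (b'' ⊗ₜ[A] (1 : C)) := (tm _ _).symm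
      exact ih ha b'' hcancel
  obtain ⟨y, hy⟩ := main s hsne b key
  -- y is nonzero, not a unit
  have hy0 : y ≠ 0 := by
    intro h
    exact hx.ne_zero (by rw [hy, h, TensorProduct.zero_tmul])
  have hunit_of : ∀ a : B, a ≠ 0 → IsUnit ((a ⊗ₜ[A] (1 : C)) : B ⊗[A] C) → IsUnit a := by
    intro a ha0 hau
    by_contra hna
    obtain ⟨i, hi, t, rfl⟩ := WfDvdMonoid.exists_irreducible_factor hna ha0
    have hip : Prime i := UniqueFactorizationMonoid.irreducible_iff_prime.mp hi
    have : IsUnit (i ⊗ₜ[A] (1 : C) : B ⊗[A] C) := by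
      apply isUnit_of_mul_isUnit_left (y := t ⊗ₜ[A] (1 : C))
      rw [tm]
      exact hau
    exact (auxPrime A B C K hdom i hip).1.not_isUnit this
  have hyunit : ¬ IsUnit y := by
    intro h
    exact hx.not_isUnit (by
      rw [hy]
      exact h.map (Algebra.TensorProduct.includeLeft : B →ₐ[A] B ⊗[A] C))
  have hyirr : Irreducible y := by
    refine ⟨hyunit, ?_⟩
    intro a b' hab
    have hx2 : x = (a ⊗ₜ[A] (1 : C)) * (b' ⊗ₜ[A] (1 : C)) := by rw [hy, hab, tm]
    have ha0 : a ≠ 0 := by rintro rfl; exact hy0 (by rw [hab, zero_mul])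
    have hb0 : b' ≠ 0 := by rintro rfl; exact hy0 (by rw [hab, mul_zero])
    rcases hx.isUnit_or_isUnit hx2 with h | h
    · exact Or.inl (hunit_of a ha0 h)
    · exact Or.inr (hunit_of b' hb0 h)
  have hyp : Prime y := UniqueFactorizationMonoid.irreducible_iff_prime.mp hyirr
  refine ⟨⟨y, hy⟩, ?_⟩
  rw [hy]
  exact (auxPrime A B C K hdom y hyp).1
end

section
/- Let A be a commutative ring, and let B and C be commutative A-algebras. Assume B is a Noetherian unique factorization domain, C is flat and finitely generated as an A-algebra, and for every field K that is an A-algebra, the tensor product K ⊗_A C is a unique factorization domain whose units are exactly the images of the nonzero elements of K. Let K denote the field of fractions of B. Then every nonzero element z of K ⊗_A C can be written as z = α · f, where α is (the image in K ⊗_A C of) a nonzero element of K, and f is (the image of) an element of B ⊗_A C that is not divisible in B ⊗_A C by p ⊗ 1 for any non-unit p of B. Moreover this representation is unique up to units of B: if α₁ · f₁ = α₂ · f₂ are two such representations, then there is a unit u of B with f₂ = (u ⊗ 1) · f₁ and α₂ = u⁻¹ · α₁ in K. -/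
open TensorProduct

set_option maxHeartbeats 1000000
set_option synthInstance.maxHeartbeats 100000

universe u

section Aux

variable {A B C : Type u} [CommRing A] [CommRing B] [CommRing C]
  [Algebra A B] [Algebra A C] [Module.Flat A C]

lemma aux_map_inj {B' K' : Type u} [CommRing B'] [CommRing K'] [Algebra A B'] [Algebra A K']
    (f : B' →ₐ[A] K') (hf : Function.Injective f) :
    Function.Injective (Algebra.TensorProduct.map f (AlgHom.id A C)) := by
  have h : ⇑(Algebra.TensorProduct.map f (AlgHom.id A C)) = ⇑(LinearMap.rTensor C f.toLinearMap) := by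
    funext x
    induction x using TensorProduct.induction_on with
    | zero => simp
    | tmul b c => simp
    | add x y hx hy => simp [map_add, hx, hy]
  rw [h]
  exact Module.Flat.rTensor_preserves_injective_linearMap _ hf

/-- The kernel of `B ⊗ C → (B/p) ⊗ C` is generated by `p ⊗ 1`. -/
lemma aux_ker (p : B) (g : B ⊗[A] C) :
    Algebra.TensorProduct.map (Ideal.Quotient.mkₐ A (Ideal.span {p})) (AlgHom.id A C) g = 0 ↔
      (p ⊗ₜ[A] (1 : C)) ∣ g := by
  set I : Ideal B := Ideal.span {p}
  set π : B ⊗[A] C := p ⊗ₜ[A] (1 : C)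
  set J : Ideal (B ⊗[A] C) := Ideal.span {π}
  constructor
  · intro h0
    have hf₁ : ∀ a ∈ I,
        ((Ideal.Quotient.mkₐ A J).comp
          (Algebra.TensorProduct.includeLeft : B →ₐ[A] B ⊗[A] C)) a = 0 := by
      intro a ha
      rw [Ideal.mem_span_singleton] at ha
      obtain ⟨c, rfl⟩ := ha
      have hmem : ((p * c) ⊗ₜ[A] (1 : C)) ∈ J := by
        rw [Ideal.mem_span_singleton]
        exact ⟨c ⊗ₜ[A] (1 : C), by simp [π, Algebra.TensorProduct.tmul_mul_tmul]⟩
      rw [AlgHom.comp_apply, Algebra.TensorProduct.includeLeft_apply,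
        Ideal.Quotient.mkₐ_eq_mk, Ideal.Quotient.eq_zero_iff_mem]
      exact hmem
    let ψ : (B ⧸ I) ⊗[A] C →ₐ[A] (B ⊗[A] C) ⧸ J :=
      Algebra.TensorProduct.productMap (Ideal.Quotient.liftₐ I _ hf₁)
        ((Ideal.Quotient.mkₐ A J).comp Algebra.TensorProduct.includeRight)
    have hcomp : ∀ x : B ⊗[A] C,
        ψ (Algebra.TensorProduct.map (Ideal.Quotient.mkₐ A I) (AlgHom.id A C) x) =
          Ideal.Quotient.mk J x := by
      intro x
      induction x using TensorProduct.induction_on with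
      | zero => simp
      | tmul b c =>
          have : ((b ⊗ₜ[A] (1 : C)) * ((1 : B) ⊗ₜ[A] c) : B ⊗[A] C) = b ⊗ₜ[A] c := by
            simp [Algebra.TensorProduct.tmul_mul_tmul]
          simp only [Algebra.TensorProduct.map_tmul, AlgHom.coe_id, id_eq, ψ,
            Algebra.TensorProduct.productMap_apply_tmul]
          rw [Ideal.Quotient.liftₐ_apply]
          erw [Ideal.Quotient.lift_mk]
          show (Ideal.Quotient.mk J) (b ⊗ₜ[A] (1 : C)) *
            (Ideal.Quotient.mk J) ((1 : B) ⊗ₜ[A] c) = (Ideal.Quotient.mk J) (b ⊗ₜ[A] c)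
          rw [← map_mul, this]
      | add x y hx hy => simp [map_add, hx, hy]
    have hg := hcomp g
    rw [h0, map_zero] at hg
    have hmem : g ∈ J := by
      rw [← Ideal.Quotient.eq_zero_iff_mem, ← hg]
    exact Ideal.mem_span_singleton.mp hmem
  · rintro ⟨h, rfl⟩
    rw [map_mul]
    have : Algebra.TensorProduct.map (Ideal.Quotient.mkₐ A I) (AlgHom.id A C) π = 0 := by
      have hp0 : Ideal.Quotient.mk I p = 0 := by
        rw [Ideal.Quotient.eq_zero_iff_mem]
        exact Ideal.subset_span rfl
      simp [π, Algebra.TensorProduct.map_tmul, Ideal.Quotient.mkₐ_eq_mk, hp0]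
    rw [this, zero_mul]

lemma aux_domain_quot
    (hdom : ∀ (L : Type u) [Field L] [Algebra A L], IsDomain (L ⊗[A] C))
    {p : B} (hp : Prime p) : IsDomain ((B ⧸ Ideal.span {p}) ⊗[A] C) := by
  haveI hIp : (Ideal.span ({p} : Set B)).IsPrime :=
    (Ideal.span_singleton_prime hp.ne_zero).mpr hp
  set D := B ⧸ Ideal.span ({p} : Set B)
  haveI : IsScalarTower A D (FractionRing D) := IsScalarTower.of_algebraMap_eq fun a => rfl
  haveI := hdom (FractionRing D)
  exact Function.Injective.isDomain
    (Algebra.TensorProduct.map (IsScalarTower.toAlgHom A D (FractionRing D))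
      (AlgHom.id A C)).toRingHom
    (aux_map_inj _ (IsFractionRing.injective D (FractionRing D)))

lemma aux_dvd_mul
    (hdom : ∀ (L : Type u) [Field L] [Algebra A L], IsDomain (L ⊗[A] C))
    {p : B} (hp : Prime p) {x y : B ⊗[A] C}
    (h : (p ⊗ₜ[A] (1 : C)) ∣ x * y) :
    (p ⊗ₜ[A] (1 : C)) ∣ x ∨ (p ⊗ₜ[A] (1 : C)) ∣ y := by
  haveI := aux_domain_quot hdom hp
  have hxy := (aux_ker p (x * y)).mpr h
  rw [map_mul] at hxy
  rcases mul_eq_zero.mp hxy with h' | h'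
  · exact Or.inl ((aux_ker p x).mp h')
  · exact Or.inr ((aux_ker p y).mp h')

lemma aux_dvd_tmul
    (hdom : ∀ (L : Type u) [Field L] [Algebra A L], IsDomain (L ⊗[A] C))
    {p b : B} (hp : Prime p)
    (h : (p ⊗ₜ[A] (1 : C)) ∣ ((b ⊗ₜ[A] (1 : C)) : B ⊗[A] C)) : p ∣ b := by
  haveI hIp : (Ideal.span ({p} : Set B)).IsPrime :=
    (Ideal.span_singleton_prime hp.ne_zero).mpr hp
  set D := B ⧸ Ideal.span ({p} : Set B)
  haveI : IsScalarTower A D (FractionRing D) := IsScalarTower.of_algebraMap_eq fun a => rfl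
  haveI := hdom (FractionRing D)
  have h0 := (aux_ker p (b ⊗ₜ[A] (1 : C))).mpr h
  rw [Algebra.TensorProduct.map_tmul] at h0
  have h1 := congrArg
    (Algebra.TensorProduct.map (IsScalarTower.toAlgHom A D (FractionRing D)) (AlgHom.id A C)) h0
  rw [Algebra.TensorProduct.map_tmul, map_zero] at h1
  have h2 : algebraMap (FractionRing D) (FractionRing D ⊗[A] C)
      ((algebraMap D (FractionRing D)) ((Ideal.Quotient.mkₐ A _) b)) = 0 := by
    rw [Algebra.TensorProduct.algebraMap_apply]
    simpa using h1
  haveI hnt : Nontrivial (FractionRing D ⊗[A] C) := (hdom (FractionRing D)).toNontrivial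
  have h3 : (algebraMap D (FractionRing D)) ((Ideal.Quotient.mkₐ A _) b) = 0 := by
    apply (algebraMap (FractionRing D) (FractionRing D ⊗[A] C)).injective
    rw [h2, map_zero]
  have h4 : (Ideal.Quotient.mk (Ideal.span ({p} : Set B))) b = 0 := by
    apply IsFractionRing.injective D (FractionRing D)
    rw [map_zero, ← h3]
    rfl
  rw [Ideal.Quotient.eq_zero_iff_mem, Ideal.mem_span_singleton] at h4
  exact h4

lemma aux_not_unit [Nontrivial B]
    (hdom : ∀ (L : Type u) [Field L] [Algebra A L], IsDomain (L ⊗[A] C))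
    {p : B} (hpu : ¬ IsUnit p) : ¬ IsUnit ((p ⊗ₜ[A] (1 : C)) : B ⊗[A] C) := by
  intro hu
  obtain ⟨m, hm, hpm⟩ := Ideal.exists_le_maximal (Ideal.span {p})
    (by rwa [Ne, Ideal.span_singleton_eq_top])
  letI : Field (B ⧸ m) := Ideal.Quotient.field m
  haveI := hdom (B ⧸ m)
  have h := hu.map (Algebra.TensorProduct.map (Ideal.Quotient.mkₐ A m) (AlgHom.id A C))
  rw [Algebra.TensorProduct.map_tmul] at h
  have h0 : (Ideal.Quotient.mkₐ A m) p = 0 := by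
    rw [Ideal.Quotient.mkₐ_eq_mk, Ideal.Quotient.eq_zero_iff_mem]
    exact hpm (Ideal.subset_span rfl)
  rw [h0] at h
  simp only [TensorProduct.zero_tmul] at h
  exact not_isUnit_zero h

end Aux

/-- Under the hypotheses of the UFD tensor product proposition, with `K` the fraction field of
`B`, every nonzero element of `K ⊗[A] C` can be written as `α · f` with `α ∈ K` nonzero and
`f ∈ B ⊗[A] C` not divisible by `p ⊗ 1` for any non-unit `p ∈ B`, uniquely up to units of `B`. -/
theorem representation_alpha_f (A B C K : Type u) [CommRing A] [CommRing B] [CommRing C]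
    [Algebra A B] [Algebra A C]
    [IsNoetherianRing B] [IsDomain B] [UniqueFactorizationMonoid B]
    [Module.Flat A C] [Algebra.FiniteType A C]
    [Field K] [Algebra B K] [IsFractionRing B K] [Algebra A K] [IsScalarTower A B K]
    (hdom : ∀ (L : Type u) [Field L] [Algebra A L], IsDomain (L ⊗[A] C))
    (hufd : ∀ (L : Type u) [Field L] [Algebra A L] [IsDomain (L ⊗[A] C)],
      UniqueFactorizationMonoid (L ⊗[A] C))
    (hunits : ∀ (L : Type u) [Field L] [Algebra A L] (z : L ⊗[A] C),
      IsUnit z ↔ ∃ c : L, c ≠ 0 ∧ algebraMap L (L ⊗[A] C) c = z)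
    (z : K ⊗[A] C) (hz : z ≠ 0) :
    (∃ (α : K) (f : B ⊗[A] C), α ≠ 0 ∧
        (∀ p : B, ¬ IsUnit p → ¬ (p ⊗ₜ[A] (1 : C)) ∣ f) ∧
        z = algebraMap K (K ⊗[A] C) α *
          (Algebra.TensorProduct.map (IsScalarTower.toAlgHom A B K) (AlgHom.id A C)) f) ∧
      (∀ (α₁ α₂ : K) (f₁ f₂ : B ⊗[A] C),
        (∀ p : B, ¬ IsUnit p → ¬ (p ⊗ₜ[A] (1 : C)) ∣ f₁) →
        (∀ p : B, ¬ IsUnit p → ¬ (p ⊗ₜ[A] (1 : C)) ∣ f₂) →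
        z = algebraMap K (K ⊗[A] C) α₁ *
          (Algebra.TensorProduct.map (IsScalarTower.toAlgHom A B K) (AlgHom.id A C)) f₁ →
        z = algebraMap K (K ⊗[A] C) α₂ *
          (Algebra.TensorProduct.map (IsScalarTower.toAlgHom A B K) (AlgHom.id A C)) f₂ →
        ∃ u : Bˣ, f₂ = ((u : B) ⊗ₜ[A] (1 : C)) * f₁ ∧
          α₂ = algebraMap B K ((u⁻¹ : Bˣ) : B) * α₁) := by
  classical
  set Φ : B ⊗[A] C →ₐ[A] K ⊗[A] C :=
    Algebra.TensorProduct.map (IsScalarTower.toAlgHom A B K) (AlgHom.id A C) with hΦdef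
  have hBK : Function.Injective (algebraMap B K) := IsFractionRing.injective B K
  have hΦinj : Function.Injective Φ := aux_map_inj _ hBK
  haveI hKdom : IsDomain (K ⊗[A] C) := hdom K
  haveI hBCdom : IsDomain (B ⊗[A] C) := Function.Injective.isDomain Φ.toRingHom hΦinj
  haveI : IsNoetherianRing (B ⊗[A] C) := Algebra.FiniteType.isNoetherianRing B (B ⊗[A] C)
  haveI hwf : WfDvdMonoid (B ⊗[A] C) := IsNoetherianRing.wfDvdMonoid
  haveI hntK : Nontrivial (K ⊗[A] C) := hKdom.toNontrivial
  have hKinj : Function.Injective (algebraMap K (K ⊗[A] C)) := RingHom.injective _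
  have hΦt : ∀ b : B, Φ (b ⊗ₜ[A] (1 : C)) = algebraMap K (K ⊗[A] C) (algebraMap B K b) := by
    intro b
    simp [hΦdef]
  -- common denominator
  have hden : ∀ w : K ⊗[A] C, ∃ (b : B) (f : B ⊗[A] C), b ≠ 0 ∧
      algebraMap K (K ⊗[A] C) (algebraMap B K b) * w = Φ f := by
    intro w
    induction w using TensorProduct.induction_on with
    | zero => exact ⟨1, 0, one_ne_zero, by simp⟩
    | tmul k c =>
        obtain ⟨⟨n, d⟩, hnd⟩ := IsLocalization.surj (nonZeroDivisors B) (S := K) k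
        refine ⟨(d : B), n ⊗ₜ[A] c, nonZeroDivisors.ne_zero d.2, ?_⟩
        have h1 : algebraMap K (K ⊗[A] C) (algebraMap B K (d : B)) * (k ⊗ₜ[A] c)
            = (algebraMap B K (d : B) * k) ⊗ₜ[A] c := by
          rw [Algebra.TensorProduct.algebraMap_apply, Algebra.TensorProduct.tmul_mul_tmul,
            one_mul]
          simp
        rw [h1, mul_comm, hnd]
        simp [hΦdef]
    | add x y hx hy =>
        obtain ⟨b₁, f₁, hb₁, h₁⟩ := hx
        obtain ⟨b₂, f₂, hb₂, h₂⟩ := hy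
        refine ⟨b₁ * b₂, (b₂ ⊗ₜ[A] (1 : C)) * f₁ + (b₁ ⊗ₜ[A] (1 : C)) * f₂,
          mul_ne_zero hb₁ hb₂, ?_⟩
        rw [map_add, map_mul Φ, map_mul Φ, hΦt, hΦt, ← h₁, ← h₂, map_mul, map_mul]
        ring
  -- stripping off primes
  have hstrip : ∀ f : B ⊗[A] C, f ≠ 0 → ∃ (β : K) (g : B ⊗[A] C), β ≠ 0 ∧
      (∀ p : B, ¬ IsUnit p → ¬ (p ⊗ₜ[A] (1 : C)) ∣ g) ∧
      Φ f = algebraMap K (K ⊗[A] C) β * Φ g := by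
    intro f
    refine (wellFounded_dvdNotUnit (α := B ⊗[A] C)).induction
      (C := fun f => f ≠ 0 → ∃ (β : K) (g : B ⊗[A] C), β ≠ 0 ∧
        (∀ p : B, ¬ IsUnit p → ¬ (p ⊗ₜ[A] (1 : C)) ∣ g) ∧
        Φ f = algebraMap K (K ⊗[A] C) β * Φ g) f ?_
    intro f IH hf0
    by_cases hprim : ∀ p : B, ¬ IsUnit p → ¬ (p ⊗ₜ[A] (1 : C)) ∣ f
    · exact ⟨1, f, one_ne_zero, hprim, by rw [map_one, one_mul]⟩
    · push_neg at hprim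
      obtain ⟨p, hpu, h, hfh⟩ := hprim
      have hp0 : p ≠ 0 := by
        rintro rfl
        rw [TensorProduct.zero_tmul, zero_mul] at hfh
        exact hf0 hfh
      have hh0 : h ≠ 0 := by
        rintro rfl
        rw [mul_zero] at hfh
        exact hf0 hfh
      have hdnu : DvdNotUnit h f :=
        ⟨hh0, p ⊗ₜ[A] (1 : C), aux_not_unit hdom hpu, by rw [hfh, mul_comm]⟩
      obtain ⟨β', g, hβ', hgprim, hΦg⟩ := IH h hdnu hh0
      refine ⟨algebraMap B K p * β', g,
        mul_ne_zero ((map_ne_zero_iff _ hBK).mpr hp0) hβ', hgprim, ?_⟩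
      rw [hfh, map_mul, hΦt, hΦg, map_mul]
      ring
  -- existence
  obtain ⟨b, f₀, hb, hbf⟩ := hden z
  have hbK : algebraMap B K b ≠ 0 := (map_ne_zero_iff _ hBK).mpr hb
  have hbKC : algebraMap K (K ⊗[A] C) (algebraMap B K b) ≠ 0 :=
    fun h => hbK (hKinj (by rw [h, map_zero]))
  have hf₀ : f₀ ≠ 0 := by
    rintro rfl
    rw [map_zero] at hbf
    rcases mul_eq_zero.mp hbf with h | h
    · exact hbKC h
    · exact hz h
  obtain ⟨β, g, hβ, hgprim, hΦg⟩ := hstrip f₀ hf₀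
  have hexist : z = algebraMap K (K ⊗[A] C) ((algebraMap B K b)⁻¹ * β) * Φ g := by
    apply mul_left_cancel₀ hbKC
    rw [hbf, hΦg, ← mul_assoc, ← map_mul]
    congr 2
    field_simp
  refine ⟨⟨(algebraMap B K b)⁻¹ * β, g, mul_ne_zero (inv_ne_zero hbK) hβ, hgprim, hexist⟩, ?_⟩
  -- uniqueness
  intro α₁ α₂ f₁ f₂ hp₁ hp₂ he₁ he₂
  have hα₁ : α₁ ≠ 0 := by rintro rfl; rw [map_zero, zero_mul] at he₁; exact hz he₁
  have hα₂ : α₂ ≠ 0 := by rintro rfl; rw [map_zero, zero_mul] at he₂; exact hz he₂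
  have E : algebraMap K (K ⊗[A] C) α₁ * Φ f₁ = algebraMap K (K ⊗[A] C) α₂ * Φ f₂ :=
    he₁.symm.trans he₂
  obtain ⟨⟨n, d⟩, hnd⟩ := IsLocalization.surj (nonZeroDivisors B) (S := K) (α₁ * α₂⁻¹)
  have hd0 : (d : B) ≠ 0 := nonZeroDivisors.ne_zero d.2
  obtain ⟨n', d', c, hrel, hn, hd⟩ :=
    UniqueFactorizationMonoid.exists_reduced_factors' n (d : B) hd0
  have hc0 : c ≠ 0 := fun h => hd0 (by rw [← hd, h, zero_mul])
  have hd'0 : d' ≠ 0 := fun h => hd0 (by rw [← hd, h, mul_zero])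
  have hcK : algebraMap B K c ≠ 0 := (map_ne_zero_iff _ hBK).mpr hc0
  have hρ : (α₁ * α₂⁻¹) * algebraMap B K d' = algebraMap B K n' := by
    apply mul_left_cancel₀ hcK
    have h2 : (α₁ * α₂⁻¹) * algebraMap B K (c * d') = algebraMap B K (c * n') := by
      rw [hd, hn]; exact hnd
    rw [map_mul, map_mul] at h2
    linear_combination h2
  have hdn : α₁ * algebraMap B K d' = α₂ * algebraMap B K n' := by
    have h2 := congrArg (· * α₂) hρ
    calc α₁ * algebraMap B K d'
        = α₁ * α₂⁻¹ * algebraMap B K d' * α₂ := by field_simp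
      _ = algebraMap B K n' * α₂ := h2
      _ = α₂ * algebraMap B K n' := mul_comm _ _
  have hn'0 : n' ≠ 0 := by
    intro h
    rw [h, map_zero, mul_zero] at hdn
    exact (mul_ne_zero hα₁ ((map_ne_zero_iff _ hBK).mpr hd'0)) hdn
  have hα₂K : algebraMap K (K ⊗[A] C) α₂ ≠ 0 :=
    fun h => hα₂ (hKinj (by rw [h, map_zero]))
  have key : (n' ⊗ₜ[A] (1 : C)) * f₁ = (d' ⊗ₜ[A] (1 : C)) * f₂ := by
    apply hΦinj
    rw [map_mul, map_mul, hΦt, hΦt]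
    apply mul_left_cancel₀ hα₂K
    calc algebraMap K (K ⊗[A] C) α₂ * (algebraMap K (K ⊗[A] C) (algebraMap B K n') * Φ f₁)
        = algebraMap K (K ⊗[A] C) (α₂ * algebraMap B K n') * Φ f₁ := by
          rw [map_mul, mul_assoc]
      _ = algebraMap K (K ⊗[A] C) (α₁ * algebraMap B K d') * Φ f₁ := by rw [← hdn]
      _ = algebraMap K (K ⊗[A] C) (algebraMap B K d') *
            (algebraMap K (K ⊗[A] C) α₁ * Φ f₁) := by rw [map_mul]; ring
      _ = algebraMap K (K ⊗[A] C) (algebraMap B K d') *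
            (algebraMap K (K ⊗[A] C) α₂ * Φ f₂) := by rw [E]
      _ = algebraMap K (K ⊗[A] C) α₂ *
            (algebraMap K (K ⊗[A] C) (algebraMap B K d') * Φ f₂) := by ring
  have hd'u : IsUnit d' := by
    by_contra hd'u
    obtain ⟨q, hq, hqd⟩ := WfDvdMonoid.exists_irreducible_factor hd'u hd'0
    have hqp : Prime q := UniqueFactorizationMonoid.irreducible_iff_prime.mp hq
    obtain ⟨e, he⟩ := hqd
    have hqdvd : (q ⊗ₜ[A] (1 : C)) ∣ (n' ⊗ₜ[A] (1 : C)) * f₁ := by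
      rw [key, he]
      exact ⟨(e ⊗ₜ[A] (1 : C)) * f₂, by
        rw [← mul_assoc, Algebra.TensorProduct.tmul_mul_tmul, one_mul]⟩
    rcases aux_dvd_mul hdom hqp hqdvd with h' | h'
    · exact hq.not_isUnit (hrel (aux_dvd_tmul hdom hqp h') ⟨e, he⟩)
    · exact hp₁ q hq.not_isUnit h'
  have hn'u : IsUnit n' := by
    by_contra hn'u
    obtain ⟨q, hq, hqn⟩ := WfDvdMonoid.exists_irreducible_factor hn'u hn'0
    have hqp : Prime q := UniqueFactorizationMonoid.irreducible_iff_prime.mp hq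
    obtain ⟨e, he⟩ := hqn
    have hqdvd : (q ⊗ₜ[A] (1 : C)) ∣ (d' ⊗ₜ[A] (1 : C)) * f₂ := by
      rw [← key, he]
      exact ⟨(e ⊗ₜ[A] (1 : C)) * f₁, by
        rw [← mul_assoc, Algebra.TensorProduct.tmul_mul_tmul, one_mul]⟩
    rcases aux_dvd_mul hdom hqp hqdvd with h' | h'
    · exact hq.not_isUnit (hrel ⟨e, he⟩ (aux_dvd_tmul hdom hqp h'))
    · exact hp₂ q hq.not_isUnit h'
  set u : Bˣ := hn'u.unit * hd'u.unit⁻¹ with hu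
  have hdu : d' * (u : B) = n' := by
    rw [hu, Units.val_mul]
    calc d' * ((hn'u.unit : B) * ((hd'u.unit⁻¹ : Bˣ) : B))
        = (hn'u.unit : B) * ((hd'u.unit : B) * ((hd'u.unit⁻¹ : Bˣ) : B)) := by
          rw [hd'u.unit_spec]; ring
      _ = n' := by rw [Units.mul_inv, mul_one, hn'u.unit_spec]
  have hun : ((u⁻¹ : Bˣ) : B) * n' = d' := by
    rw [← hdu, mul_comm d' (u : B), ← mul_assoc, Units.inv_mul, one_mul]
  have htne : ((d' ⊗ₜ[A] (1 : C)) : B ⊗[A] C) ≠ 0 := by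
    intro h
    have h2 := congrArg Φ h
    rw [hΦt, map_zero] at h2
    exact ((map_ne_zero_iff _ hBK).mpr hd'0) (hKinj (by rw [h2, map_zero]))
  refine ⟨u, ?_, ?_⟩
  · apply mul_left_cancel₀ htne
    calc (d' ⊗ₜ[A] (1 : C)) * f₂ = (n' ⊗ₜ[A] (1 : C)) * f₁ := key.symm
      _ = ((d' * (u : B)) ⊗ₜ[A] (1 : C)) * f₁ := by rw [hdu]
      _ = (d' ⊗ₜ[A] (1 : C)) * (((u : B) ⊗ₜ[A] (1 : C)) * f₁) := by
          rw [← mul_assoc, Algebra.TensorProduct.tmul_mul_tmul, one_mul]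
  · apply mul_right_cancel₀ ((map_ne_zero_iff _ hBK).mpr hn'0)
    calc α₂ * algebraMap B K n' = α₁ * algebraMap B K d' := hdn.symm
      _ = α₁ * algebraMap B K (((u⁻¹ : Bˣ) : B) * n') := by rw [hun]
      _ = algebraMap B K ((u⁻¹ : Bˣ) : B) * α₁ * algebraMap B K n' := by
          rw [map_mul]; ring
end

section
/- Let A be a commutative ring, and let B and C be commutative A-algebras. Assume B is a Noetherian unique factorization domain, C is flat and finitely generated as an A-algebra, and for every field K that is an A-algebra, the tensor product K ⊗_A C is a unique factorization domain whose units are exactly the images of the nonzero elements of K. Let K denote the field of fractions of B. If x is an irreducible element of B ⊗_A C whose image in K ⊗_A C is not a unit, then the image of x in K ⊗_A C is irreducible. -/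
open TensorProduct

universe u

section Helpers

variable (A C : Type u) [CommRing A] [CommRing C] [Algebra A C]

theorem tmul_one_mul_tmul_one {R : Type u} [CommRing R] [Algebra A R] (a b : R) :
    (a ⊗ₜ[A] (1 : C)) * (b ⊗ₜ[A] (1 : C)) = (a * b) ⊗ₜ[A] (1 : C) := by
  rw [Algebra.TensorProduct.tmul_mul_tmul, mul_one]

variable [Module.Flat A C]

theorem map_id_injective {R S : Type u} [CommRing R] [CommRing S] [Algebra A R] [Algebra A S]
    (f : R →ₐ[A] S) (hf : Function.Injective f) :
    Function.Injective (Algebra.TensorProduct.map f (AlgHom.id A C)) := by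
  have h : (Algebra.TensorProduct.map f (AlgHom.id A C)).toLinearMap
      = LinearMap.rTensor C f.toLinearMap := by
    apply TensorProduct.ext'
    intro r c
    simp
  have h2 := Module.Flat.rTensor_preserves_injective_linearMap (M := C) f.toLinearMap hf
  intro a b hab
  apply h2
  rw [← h]
  exact hab

variable (B : Type u) [CommRing B] [Algebra A B] [IsDomain B]

/-- If `p` is prime in `B`, then `p ⊗ 1` is prime in `B ⊗[A] C`. -/
theorem prime_tmul_one_s9
    (hdom : ∀ (L : Type u) [Field L] [Algebra A L], IsDomain (L ⊗[A] C))
    (hnz : (r : B) → r ≠ 0 → (r ⊗ₜ[A] (1 : C) : B ⊗[A] C) ≠ 0)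
    (p : B) (hp : Prime p) : Prime (p ⊗ₜ[A] (1 : C) : B ⊗[A] C) := by
  haveI hq : (Ideal.span {p} : Ideal B).IsPrime :=
    (Ideal.span_singleton_prime hp.ne_zero).mpr hp
  haveI : IsDomain (FractionRing (B ⧸ Ideal.span {p}) ⊗[A] C) :=
    hdom (FractionRing (B ⧸ Ideal.span {p}))
  set f : B →ₐ[A] B ⧸ Ideal.span {p} := Ideal.Quotient.mkₐ A (Ideal.span {p}) with hfdef
  set g : (B ⧸ Ideal.span {p}) →ₐ[A] FractionRing (B ⧸ Ideal.span {p}) :=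
    IsScalarTower.toAlgHom A _ _ with hgdef
  have hg : Function.Injective g := IsFractionRing.injective _ _
  have hginj : Function.Injective (Algebra.TensorProduct.map g (AlgHom.id A C)) :=
    map_id_injective A C g hg
  set ψ : B ⊗[A] C →ₐ[A] (B ⧸ Ideal.span {p}) ⊗[A] C :=
    Algebra.TensorProduct.map f (AlgHom.id A C) with hψdef
  have hker : RingHom.ker ψ =
      (Ideal.span {p}).map (Algebra.TensorProduct.includeLeft : B →ₐ[A] B ⊗[A] C) := by
    rw [hψdef, Algebra.TensorProduct.rTensor_ker f (Ideal.Quotient.mkₐ_surjective A _)]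
    congr 1
    exact Ideal.Quotient.mkₐ_ker A _
  have key : ∀ t : B ⊗[A] C, ψ t = 0 ↔ (p ⊗ₜ[A] (1 : C)) ∣ t := by
    intro t
    rw [← RingHom.mem_ker, hker, Ideal.map_span, Set.image_singleton,
      Ideal.mem_span_singleton, Algebra.TensorProduct.includeLeft_apply]
  have hψp : ψ (p ⊗ₜ[A] (1 : C)) = 0 := (key _).mpr dvd_rfl
  refine ⟨hnz p hp.ne_zero, ?_, ?_⟩
  · intro hun
    have h2 : IsUnit ((Algebra.TensorProduct.map g (AlgHom.id A C)) (ψ (p ⊗ₜ[A] (1 : C)))) :=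
      (hun.map ψ).map _
    rw [hψp, map_zero] at h2
    exact not_isUnit_zero h2
  · intro a b hab
    rw [← key, ← key]
    have h0 : (Algebra.TensorProduct.map g (AlgHom.id A C)) (ψ a) *
        (Algebra.TensorProduct.map g (AlgHom.id A C)) (ψ b) = 0 := by
      rw [← map_mul, ← map_mul, (key _).mpr hab, map_zero]
    rcases mul_eq_zero.mp h0 with h | h
    · left; apply hginj; rw [h, map_zero]
    · right; apply hginj; rw [h, map_zero]

variable (K : Type u) [Field K] [Algebra B K] [IsFractionRing B K] [Algebra A K]
  [IsScalarTower A B K]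

theorem phi_inj :
    Function.Injective
      (Algebra.TensorProduct.map (IsScalarTower.toAlgHom A B K) (AlgHom.id A C)) :=
  map_id_injective A C _ (IsFractionRing.injective B K)

omit [Module.Flat A C] [IsDomain B] [IsFractionRing B K] in
theorem phi_tmul (b : B) (c : C) :
    (Algebra.TensorProduct.map (IsScalarTower.toAlgHom A B K) (AlgHom.id A C)) (b ⊗ₜ[A] c)
      = (algebraMap B K b) ⊗ₜ[A] c := rfl

/-- clearing denominators -/
theorem clear_denom (w : K ⊗[A] C) :
    ∃ (b : B) (t : B ⊗[A] C), b ≠ 0 ∧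
      (Algebra.TensorProduct.map (IsScalarTower.toAlgHom A B K) (AlgHom.id A C)) t
        = ((algebraMap B K b) ⊗ₜ[A] (1 : C)) * w := by
  induction w with
  | zero => exact ⟨1, 0, one_ne_zero, by simp⟩
  | tmul k c =>
      obtain ⟨⟨b, s⟩, h⟩ := IsLocalization.surj (nonZeroDivisors B) k
      refine ⟨s, b ⊗ₜ c, nonZeroDivisors.coe_ne_zero s, ?_⟩
      rw [phi_tmul, Algebra.TensorProduct.tmul_mul_tmul, one_mul, mul_comm, h]
  | add w₁ w₂ ih₁ ih₂ =>
      obtain ⟨b₁, t₁, hb₁, ht₁⟩ := ih₁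
      obtain ⟨b₂, t₂, hb₂, ht₂⟩ := ih₂
      refine ⟨b₁ * b₂, (b₂ ⊗ₜ (1:C)) * t₁ + (b₁ ⊗ₜ (1:C)) * t₂, mul_ne_zero hb₁ hb₂, ?_⟩
      rw [map_add, map_mul, map_mul, ht₁, ht₂, phi_tmul, phi_tmul, mul_add]
      congr 1
      · rw [← mul_assoc, tmul_one_mul_tmul_one, ← map_mul, mul_comm b₂ b₁]
      · rw [← mul_assoc, tmul_one_mul_tmul_one, ← map_mul]

omit [Field K] [Algebra B K] [IsFractionRing B K] [Algebra A K] [IsScalarTower A B K] in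
theorem cancel_lemma [IsDomain (B ⊗[A] C)] [UniqueFactorizationMonoid B]
    (hdom : ∀ (L : Type u) [Field L] [Algebra A L], IsDomain (L ⊗[A] C))
    (hnz : (r : B) → r ≠ 0 → (r ⊗ₜ[A] (1 : C) : B ⊗[A] C) ≠ 0)
    (x : B ⊗[A] C) :
    ∀ b : B, b ≠ 0 → ∀ y' z' : B ⊗[A] C, (b ⊗ₜ[A] (1 : C)) * x = y' * z' →
      ∃ (d e : B) (y₁ z₁ : B ⊗[A] C), b = d * e ∧ y' = (d ⊗ₜ[A] (1:C)) * y₁ ∧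
        z' = (e ⊗ₜ[A] (1:C)) * z₁ ∧ x = y₁ * z₁ := by
  intro b
  induction b using UniqueFactorizationMonoid.induction_on_prime with
  | h₁ => intro h; exact absurd rfl h
  | h₂ u hu =>
      intro _ y' z' h
      obtain ⟨v, rfl⟩ := hu
      refine ⟨v, 1, ((v⁻¹ : Bˣ) : B) ⊗ₜ (1:C) * y', z', (mul_one _).symm, ?_,
        by rw [← Algebra.TensorProduct.one_def, one_mul], ?_⟩
      · rw [← mul_assoc, tmul_one_mul_tmul_one, Units.mul_inv,
          ← Algebra.TensorProduct.one_def, one_mul]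
      · have h2 : ((v⁻¹ : Bˣ) : B) ⊗ₜ (1:C) * (((v : B)) ⊗ₜ (1:C) * x) =
            ((v⁻¹ : Bˣ) : B) ⊗ₜ (1:C) * (y' * z') := by rw [h]
        rw [← mul_assoc, tmul_one_mul_tmul_one, Units.inv_mul,
          ← Algebra.TensorProduct.one_def, one_mul, ← mul_assoc] at h2
        exact h2
  | h₃ a p ha hp ih =>
      intro _ y' z' h
      have hprime := prime_tmul_one_s9 A C B hdom hnz p hp
      have hdvd : (p ⊗ₜ[A] (1:C)) ∣ y' * z' := by
        refine ⟨(a ⊗ₜ[A] (1:C)) * x, ?_⟩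
        rw [← h, ← mul_assoc, tmul_one_mul_tmul_one]
      rcases hprime.2.2 y' z' hdvd with ⟨y'', hy''⟩ | ⟨z'', hz''⟩
      · have hcancel : (a ⊗ₜ[A] (1:C)) * x = y'' * z' := by
          apply mul_left_cancel₀ hprime.ne_zero
          rw [← mul_assoc, tmul_one_mul_tmul_one, h, hy'', mul_assoc]
        obtain ⟨d, e, y₁, z₁, hde, hy₁, hz₁, hx⟩ := ih ha y'' z' hcancel
        refine ⟨p * d, e, y₁, z₁, by rw [hde, mul_assoc], ?_, hz₁, hx⟩
        rw [hy'', hy₁, ← mul_assoc, tmul_one_mul_tmul_one]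
      · have hcancel : (a ⊗ₜ[A] (1:C)) * x = y' * z'' := by
          apply mul_left_cancel₀ hprime.ne_zero
          rw [← mul_assoc, tmul_one_mul_tmul_one, h, hz'']
          ring
        obtain ⟨d, e, y₁, z₁, hde, hy₁, hz₁, hx⟩ := ih ha y' z'' hcancel
        refine ⟨d, p * e, y₁, z₁, by rw [hde]; ring, hy₁, ?_, hx⟩
        rw [hz'', hz₁, ← mul_assoc, tmul_one_mul_tmul_one]

end Helpers


/-- Under the hypotheses of the UFD tensor product proposition, with `K` the fraction field of
`B`, if `x` is irreducible in `B ⊗[A] C` and its image in `K ⊗[A] C` is not a unit, then its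
image in `K ⊗[A] C` is irreducible. -/
theorem irreducible_image_of_not_unit (A B C K : Type u) [CommRing A] [CommRing B] [CommRing C]
    [Algebra A B] [Algebra A C]
    [IsNoetherianRing B] [IsDomain B] [UniqueFactorizationMonoid B]
    [Module.Flat A C] [Algebra.FiniteType A C]
    [Field K] [Algebra B K] [IsFractionRing B K] [Algebra A K] [IsScalarTower A B K]
    (hdom : ∀ (L : Type u) [Field L] [Algebra A L], IsDomain (L ⊗[A] C))
    (hufd : ∀ (L : Type u) [Field L] [Algebra A L] [IsDomain (L ⊗[A] C)],
      UniqueFactorizationMonoid (L ⊗[A] C))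
    (hunits : ∀ (L : Type u) [Field L] [Algebra A L] (z : L ⊗[A] C),
      IsUnit z ↔ ∃ c : L, c ≠ 0 ∧ algebraMap L (L ⊗[A] C) c = z)
    (x : B ⊗[A] C) (hx : Irreducible x)
    (hu : ¬ IsUnit
      ((Algebra.TensorProduct.map (IsScalarTower.toAlgHom A B K) (AlgHom.id A C)) x)) :
    Irreducible
      ((Algebra.TensorProduct.map (IsScalarTower.toAlgHom A B K) (AlgHom.id A C)) x) := by
  haveI : IsDomain (K ⊗[A] C) := hdom K
  haveI : IsDomain (B ⊗[A] C) :=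
    Function.Injective.isDomain _ (phi_inj A C B K)
  have hnz : (r : B) → r ≠ 0 → (r ⊗ₜ[A] (1 : C) : B ⊗[A] C) ≠ 0 := by
    intro r hr h0
    apply hr
    have h1 := congrArg
      (Algebra.TensorProduct.map (IsScalarTower.toAlgHom A B K) (AlgHom.id A C)) h0
    rw [phi_tmul, map_zero] at h1
    have h2 : algebraMap B K r ⊗ₜ[A] (1:C) = (algebraMap K (K ⊗[A] C)) (algebraMap B K r) := by
      simp [Algebra.TensorProduct.algebraMap_apply]
    rw [h2] at h1
    have h3 : algebraMap B K r = 0 := by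
      apply (algebraMap K (K ⊗[A] C)).injective
      rw [h1, map_zero]
    exact IsFractionRing.to_map_eq_zero_iff.mp h3
  have hUnit : ∀ b : B, b ≠ 0 → IsUnit ((algebraMap B K b) ⊗ₜ[A] (1 : C) : K ⊗[A] C) := by
    intro b hb
    rw [hunits K]
    refine ⟨algebraMap B K b, fun h => hb (IsFractionRing.to_map_eq_zero_iff.mp h), ?_⟩
    simp [Algebra.TensorProduct.algebraMap_apply]
  refine ⟨hu, ?_⟩
  intro y z hyz
  obtain ⟨b, t, hb, ht⟩ := clear_denom A C B K y
  obtain ⟨c, s, hc, hs⟩ := clear_denom A C B K z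
  have hts : ((b * c) ⊗ₜ[A] (1:C)) * x = t * s := by
    apply phi_inj A C B K
    rw [map_mul, map_mul, ht, hs, phi_tmul, hyz, map_mul, ← tmul_one_mul_tmul_one A C]
    ring
  obtain ⟨d, e, y₁, z₁, hde, hy₁, hz₁, hx'⟩ :=
    cancel_lemma A C B hdom hnz x (b * c) (mul_ne_zero hb hc) t s hts
  have hd : d ≠ 0 := fun h => (mul_ne_zero hb hc) (by rw [hde, h, zero_mul])
  have he : e ≠ 0 := fun h => (mul_ne_zero hb hc) (by rw [hde, h, mul_zero])
  rcases hx.isUnit_or_isUnit hx' with h1 | h1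
  · left
    have heq : ((algebraMap B K b) ⊗ₜ[A] (1:C)) * y
        = ((algebraMap B K d) ⊗ₜ[A] (1:C)) *
          ((Algebra.TensorProduct.map (IsScalarTower.toAlgHom A B K) (AlgHom.id A C)) y₁) := by
      rw [← ht, hy₁, map_mul, phi_tmul]
    have hy : IsUnit (((algebraMap B K b) ⊗ₜ[A] (1:C)) * y) := by
      rw [heq]
      exact (hUnit d hd).mul (h1.map _)
    exact (IsUnit.mul_iff.mp hy).2
  · right
    have heq : ((algebraMap B K c) ⊗ₜ[A] (1:C)) * z
        = ((algebraMap B K e) ⊗ₜ[A] (1:C)) *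
          ((Algebra.TensorProduct.map (IsScalarTower.toAlgHom A B K) (AlgHom.id A C)) z₁) := by
      rw [← hs, hz₁, map_mul, phi_tmul]
    have hz : IsUnit (((algebraMap B K c) ⊗ₜ[A] (1:C)) * z) := by
      rw [heq]
      exact (hUnit e he).mul (h1.map _)
    exact (IsUnit.mul_iff.mp hz).2
end
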